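/- arXiv:math/0506284 — 9 statements merged into one kernel-verified Lean document; each statement's English description precedes it below -/
import Mathlib

section
/- Let X be a reflexive Banach space of dimension greater than 1 and let T be a bounded linear operator on X. Then T has a non-trivial closed invariant subspace if and only if there exists a pair of compatible sequences for T. -/
open Filter Topology

/-- Two bounded sequences `(x n)` in `X` and `(xs n)` in `X*` are *compatible* for `T` if
(a) no subsequence of `(x n)` converges weakly to zero, (b) no subsequence of `(xs n)`
converges to zero in the weak topology of `X*`, and (c) there is a sequence of positive
reals `ε n → 0` with `|xs m (T^k (x l))| < ε m` for all `1 ≤ k ≤ l ≤ m`. -/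
def IsCompatible {𝕜 X : Type*} [RCLike 𝕜] [NormedAddCommGroup X] [NormedSpace 𝕜 X]
    (T : X →L[𝕜] X) (x : ℕ → X) (xs : ℕ → X →L[𝕜] 𝕜) : Prop :=
  (∃ C : ℝ, ∀ n, ‖x n‖ ≤ C) ∧
  (∃ C : ℝ, ∀ n, ‖xs n‖ ≤ C) ∧
  (¬ ∃ φ : ℕ → ℕ, StrictMono φ ∧
      ∀ f : X →L[𝕜] 𝕜, Tendsto (fun n => f (x (φ n))) atTop (𝓝 0)) ∧
  (¬ ∃ φ : ℕ → ℕ, StrictMono φ ∧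
      ∀ F : (X →L[𝕜] 𝕜) →L[𝕜] 𝕜, Tendsto (fun n => F (xs (φ n))) atTop (𝓝 0)) ∧
  (∃ ε : ℕ → ℝ, (∀ n, 0 < ε n) ∧ Tendsto ε atTop (𝓝 0) ∧
      ∀ k l m : ℕ, 1 ≤ k → k ≤ l → l ≤ m → ‖xs m ((T ^ k) (x l))‖ < ε m)

/-!
A nontrivial closed invariant subspace `Y` yields compatible constant sequences: a nonzero
`y ∈ Y` and a nonzero functional vanishing on `Y`.

Conversely, Banach–Alaoglu and reflexivity give, along ultrafilters finer than `atTop`, a nonzero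
weak limit `w` of `(x n)` and a nonzero weak-* limit `f` of `(xs n)`. Letting first `m → ∞` and
then `l → ∞` in condition (c) gives `f (T^k w) = 0` for all `k ≥ 1`. So the closed span of
`{T^k w : k ≥ 1}` is an invariant subspace inside `ker f`; if it is zero, then `T w = 0` and
`ker T`, or any line when `T = 0`, is invariant.
-/

section WeakStarLimits

variable {𝕜 E : Type*} [RCLike 𝕜] [NormedAddCommGroup E] [NormedSpace 𝕜 E]

theorem exists_weakStar_tendsto_ultrafilter_of_norm_le {α : Type*} (U : Ultrafilter α)
    {φ : α → StrongDual 𝕜 E} {C : ℝ} (hφ : ∀ a, ‖φ a‖ ≤ C) :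
    ∃ f : StrongDual 𝕜 E, ∀ v, Tendsto (fun a => φ a v) U (𝓝 (f v)) := by
  have hball : Set.range (fun a => StrongDual.toWeakDual (φ a)) ⊆
      WeakDual.toStrongDual ⁻¹' Metric.closedBall 0 C := by
    rintro _ ⟨a, rfl⟩
    simpa using hφ a
  obtain ⟨f, -, hf⟩ :=
    (WeakDual.isCompact_closedBall (0 : StrongDual 𝕜 E) C).ultrafilter_le_nhds'
      (U.map fun a => StrongDual.toWeakDual (φ a)) (Filter.mem_of_superset (by simp) hball)
  exact ⟨WeakDual.toStrongDual f, fun v => ((WeakDual.eval_continuous v).tendsto f).comp hf⟩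

theorem exists_weakStar_tendsto_ultrafilter_ne_zero {φ : ℕ → StrongDual 𝕜 E} {C : ℝ}
    (hφ : ∀ n, ‖φ n‖ ≤ C) {v : E} (hv : ¬ Tendsto (fun n => φ n v) atTop (𝓝 0)) :
    ∃ U : Ultrafilter ℕ, (U : Filter ℕ) ≤ atTop ∧
      ∃ f : StrongDual 𝕜 E, f ≠ 0 ∧ ∀ w, Tendsto (fun n => φ n w) U (𝓝 (f w)) := by
  obtain ⟨δ, hδ, hfreq⟩ : ∃ δ > 0, ∃ᶠ n in atTop, δ ≤ ‖φ n v‖ := by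
    simpa [Metric.tendsto_nhds, Filter.not_eventually, dist_eq_norm,
      Filter.frequently_atTop] using hv
  have : (atTop ⊓ 𝓟 {n | δ ≤ ‖φ n v‖}).NeBot := frequently_iff_neBot.mp hfreq
  let U := Ultrafilter.of (atTop ⊓ 𝓟 {n | δ ≤ ‖φ n v‖})
  have hU : (U : Filter ℕ) ≤ atTop ⊓ 𝓟 {n | δ ≤ ‖φ n v‖} := Ultrafilter.of_le _
  obtain ⟨f, hf⟩ := exists_weakStar_tendsto_ultrafilter_of_norm_le U hφ
  have hfv : δ ≤ ‖f v‖ :=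
    ge_of_tendsto (hf v).norm (le_principal_iff.mp (hU.trans inf_le_right))
  refine ⟨U, hU.trans inf_le_left, f, fun hf0 => ?_, hf⟩
  simp [hf0] at hfv
  linarith

end WeakStarLimits

section InvariantSubspace

variable {𝕜 X : Type*} [RCLike 𝕜] [NormedAddCommGroup X] [NormedSpace 𝕜 X]

theorem exists_ne_zero_forall_mem_eq_zero {Y : Submodule 𝕜 X} [IsClosed (Y : Set X)]
    (hYtop : Y ≠ ⊤) : ∃ f : StrongDual 𝕜 X, f ≠ 0 ∧ ∀ y ∈ Y, f y = 0 := by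
  obtain ⟨z, hz⟩ : ∃ z, z ∉ Y := by simpa [Submodule.eq_top_iff'] using hYtop
  obtain ⟨g, hg⟩ := SeparatingDual.exists_ne_zero (R := 𝕜)
    (show Y.mkQ z ≠ 0 by simpa using hz)
  refine ⟨g.comp Y.mkQL, fun h => hg (by simpa using congr($h z)), fun y hy => ?_⟩
  simp [(Submodule.Quotient.mk_eq_zero Y).mpr hy]

theorem exists_annihilated_orbit_of_invariant (T : X →L[𝕜] X) {Y : Submodule 𝕜 X}
    (hYc : IsClosed (Y : Set X)) (hYbot : Y ≠ ⊥) (hYtop : Y ≠ ⊤) (hYinv : ∀ y ∈ Y, T y ∈ Y) :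
    ∃ x ≠ 0, ∃ f : StrongDual 𝕜 X, f ≠ 0 ∧ ∀ k, f ((T ^ k) x) = 0 := by
  obtain ⟨x, hxY, hx⟩ := Submodule.exists_mem_ne_zero_of_ne_bot hYbot
  have : IsClosed (Y : Set X) := hYc
  obtain ⟨f, hf, hfY⟩ := exists_ne_zero_forall_mem_eq_zero hYtop
  refine ⟨x, hx, f, hf, fun k => hfY _ ?_⟩
  induction k with
  | zero => simpa using hxY
  | succ k ih => simpa only [pow_succ', mul_apply_eq_comp] using hYinv _ ih

theorem isCompatible_const (T : X →L[𝕜] X) {x : X} {f : StrongDual 𝕜 X} (hx : x ≠ 0)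
    (hf : f ≠ 0) (horbit : ∀ k, 1 ≤ k → f ((T ^ k) x) = 0) :
    IsCompatible T (fun _ => x) (fun _ => f) := by
  obtain ⟨z, hz⟩ : ∃ z, f z ≠ 0 := by simpa [DFunLike.ne_iff] using hf
  obtain ⟨g, hg⟩ := SeparatingDual.exists_ne_zero (R := 𝕜) hx
  refine ⟨⟨‖x‖, fun _ => le_rfl⟩, ⟨‖f‖, fun _ => le_rfl⟩, ?_, ?_,
    ⟨fun n => 1 / ((n : ℝ) + 1), fun n => by positivity, tendsto_one_div_add_atTop_nhds_zero_nat,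
      fun k l m hk _ _ => by simp only [horbit k hk, norm_zero]; positivity⟩⟩
  · rintro ⟨φ, -, hnull⟩
    exact hg (tendsto_const_nhds_iff.mp (hnull g))
  · rintro ⟨φ, -, hnull⟩
    exact hz (tendsto_const_nhds_iff.mp (hnull (NormedSpace.inclusionInDoubleDual 𝕜 X z)))

theorem exists_weak_tendsto_ultrafilter_ne_zero
    (hrefl : Function.Surjective (NormedSpace.inclusionInDoubleDual 𝕜 X)) {x : ℕ → X} {C : ℝ}
    (hx : ∀ n, ‖x n‖ ≤ C) {g : StrongDual 𝕜 X} (hg : ¬ Tendsto (fun n => g (x n)) atTop (𝓝 0)) :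
    ∃ U : Ultrafilter ℕ, (U : Filter ℕ) ≤ atTop ∧
      ∃ w : X, w ≠ 0 ∧ ∀ g : StrongDual 𝕜 X, Tendsto (fun n => g (x n)) U (𝓝 (g w)) := by
  obtain ⟨U, hU, F, hF, hlim⟩ := exists_weakStar_tendsto_ultrafilter_ne_zero
    (fun n => (NormedSpace.double_dual_bound 𝕜 X (x n)).trans (hx n)) (v := g) hg
  obtain ⟨w, rfl⟩ := hrefl F
  exact ⟨U, hU, w, fun hw => hF (by simp [hw]), hlim⟩

theorem exists_annihilated_orbit_of_isCompatible
    (hrefl : Function.Surjective (NormedSpace.inclusionInDoubleDual 𝕜 X)) {T : X →L[𝕜] X}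
    {x : ℕ → X} {xs : ℕ → StrongDual 𝕜 X} (h : IsCompatible T x xs) :
    ∃ w ≠ 0, ∃ f : StrongDual 𝕜 X, f ≠ 0 ∧ ∀ k, 1 ≤ k → f ((T ^ k) w) = 0 := by
  obtain ⟨⟨Cx, hCx⟩, ⟨Cs, hCs⟩, hx_weak, hxs_weak, ε, -, hε, hsmall⟩ := h
  obtain ⟨Φ, hΦ⟩ : ∃ Φ : StrongDual 𝕜 (StrongDual 𝕜 X),
      ¬ Tendsto (fun m => Φ (xs m)) atTop (𝓝 0) := by
    by_contra! hnull
    exact hxs_weak ⟨id, strictMono_id, hnull⟩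
  obtain ⟨z, rfl⟩ := hrefl Φ
  obtain ⟨U, hU, f, hf, hlim_f⟩ := exists_weakStar_tendsto_ultrafilter_ne_zero hCs hΦ
  obtain ⟨g, hg⟩ : ∃ g : StrongDual 𝕜 X, ¬ Tendsto (fun l => g (x l)) atTop (𝓝 0) := by
    by_contra! hnull
    exact hx_weak ⟨id, strictMono_id, hnull⟩
  obtain ⟨V, hV, w, hw, hlim_w⟩ := exists_weak_tendsto_ultrafilter_ne_zero hrefl hCx hg
  refine ⟨w, hw, f, hf, fun k hk => ?_⟩
  have hfx : ∀ l, k ≤ l → f ((T ^ k) (x l)) = 0 := fun l hkl =>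
    tendsto_nhds_unique (hlim_f _) <| (squeeze_zero_norm' (eventually_atTop.2
      ⟨l, fun m hm => (hsmall k l m hk hkl hm).le⟩) hε).mono_left hU
  refine tendsto_nhds_unique (hlim_w (f.comp (T ^ k))) (tendsto_const_nhds.congr' ?_)
  exact (eventually_ge_atTop k).mono (fun l hl => (hfx l hl).symm) |>.filter_mono hV

theorem exists_isClosed_submodule_ne_bot_ne_top (hdim : 1 < Module.rank 𝕜 X) :
    ∃ Y : Submodule 𝕜 X, IsClosed (Y : Set X) ∧ Y ≠ ⊥ ∧ Y ≠ ⊤ := by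
  have : Nontrivial X := rank_pos_iff_nontrivial.mp (zero_lt_one.trans hdim)
  obtain ⟨v, hv⟩ := exists_ne (0 : X)
  refine ⟨𝕜 ∙ v, Submodule.closed_of_finiteDimensional _, by simpa using hv, fun htop => ?_⟩
  have := rank_span_le (R := 𝕜) {v}
  rw [htop, rank_top, Cardinal.mk_singleton] at this
  exact hdim.not_ge this

theorem exists_invariant_of_ker_ne_bot (hdim : 1 < Module.rank 𝕜 X) (T : X →L[𝕜] X)
    (hker : T.ker ≠ ⊥) :
    ∃ Y : Submodule 𝕜 X, IsClosed (Y : Set X) ∧ Y ≠ ⊥ ∧ Y ≠ ⊤ ∧ ∀ y ∈ Y, T y ∈ Y := by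
  by_cases htop : T.ker = ⊤
  · obtain ⟨Y, hYc, hYbot, hYtop⟩ := exists_isClosed_submodule_ne_bot_ne_top hdim
    refine ⟨Y, hYc, hYbot, hYtop, fun y _ => ?_⟩
    have hTy : T y = 0 := LinearMap.mem_ker.mp (htop ▸ Submodule.mem_top : y ∈ T.ker)
    exact hTy ▸ Y.zero_mem
  · refine ⟨T.ker, T.isClosed_ker, hker, htop, fun y hy => ?_⟩
    have hTy : T y = 0 := LinearMap.mem_ker.mp hy
    exact hTy ▸ T.ker.zero_mem

theorem Submodule.topologicalClosure_invariant {p : Submodule 𝕜 X} {T : X →L[𝕜] X}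
    (hp : ∀ y ∈ p, T y ∈ p) : ∀ y ∈ p.topologicalClosure, T y ∈ p.topologicalClosure := by
  intro y hy
  rw [← SetLike.mem_coe, p.topologicalClosure_coe] at hy ⊢
  exact (show Set.MapsTo T p p from hp).closure T.continuous hy

theorem span_orbit_invariant (T : X →L[𝕜] X) (x : X) :
    ∀ y ∈ Submodule.span 𝕜 (Set.range fun k : ℕ => (T ^ k) x),
      T y ∈ Submodule.span 𝕜 (Set.range fun k : ℕ => (T ^ k) x) := by
  intro y hy
  induction hy using Submodule.span_induction with
  | mem _ h =>
    obtain ⟨k, rfl⟩ := h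
    exact Submodule.subset_span ⟨k + 1, by simp only [pow_succ', mul_apply_eq_comp]⟩
  | zero => simp
  | add _ _ _ _ h₁ h₂ => simpa using Submodule.add_mem _ h₁ h₂
  | smul a _ _ h => simpa using Submodule.smul_mem _ a h

theorem exists_invariant_of_annihilated_orbit {x : X} {f : StrongDual 𝕜 X}
    (hdim : 1 < Module.rank 𝕜 X) (T : X →L[𝕜] X) (hx : x ≠ 0) (hf : f ≠ 0)
    (horbit : ∀ k, 1 ≤ k → f ((T ^ k) x) = 0) :
    ∃ Y : Submodule 𝕜 X, IsClosed (Y : Set X) ∧ Y ≠ ⊥ ∧ Y ≠ ⊤ ∧ ∀ y ∈ Y, T y ∈ Y := by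
  by_cases hTx : T x = 0
  · exact exists_invariant_of_ker_ne_bot hdim T fun h => hx (LinearMap.ker_eq_bot'.mp h x hTx)
  set Y := (Submodule.span 𝕜 (Set.range fun k : ℕ => (T ^ k) (T x))).topologicalClosure
  have hTxY : T x ∈ Y :=
    Submodule.le_topologicalClosure _ (Submodule.subset_span ⟨0, by simp⟩)
  have hYker : Y ≤ f.ker := by
    refine Submodule.topologicalClosure_minimal _ ?_ f.isClosed_ker
    rw [Submodule.span_le]
    rintro _ ⟨k, rfl⟩
    have := horbit (k + 1) le_add_self
    rwa [pow_succ, mul_apply_eq_comp] at this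
  refine ⟨Y, Submodule.isClosed_topologicalClosure _, fun h => hTx (by simpa [h] using hTxY),
    fun h => hf ?_, Submodule.topologicalClosure_invariant (span_orbit_invariant T (T x))⟩
  ext v
  exact LinearMap.mem_ker.mp (hYker (h ▸ Submodule.mem_top))

end InvariantSubspace

theorem statement0_general {𝕜 X : Type*} [RCLike 𝕜] [NormedAddCommGroup X] [NormedSpace 𝕜 X]
    (hrefl : Function.Surjective ⇑(NormedSpace.inclusionInDoubleDual 𝕜 X))
    (hdim : 1 < Module.rank 𝕜 X) (T : X →L[𝕜] X) :
    (∃ Y : Submodule 𝕜 X, IsClosed (Y : Set X) ∧ Y ≠ ⊥ ∧ Y ≠ ⊤ ∧ ∀ y ∈ Y, T y ∈ Y) ↔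
      (∃ (x : ℕ → X) (xs : ℕ → X →L[𝕜] 𝕜), IsCompatible T x xs) := by
  constructor
  · rintro ⟨Y, hYc, hYbot, hYtop, hYinv⟩
    obtain ⟨x, hx, f, hf, horbit⟩ := exists_annihilated_orbit_of_invariant T hYc hYbot hYtop hYinv
    exact ⟨_, _, isCompatible_const T hx hf fun k _ => horbit k⟩
  · rintro ⟨x, xs, h⟩
    obtain ⟨w, hw, f, hf, horbit⟩ := exists_annihilated_orbit_of_isCompatible hrefl h
    exact exists_invariant_of_annihilated_orbit hdim T hw hf horbit

/-- Let `X` be a reflexive Banach space of dimension greater than 1 and `T` a bounded linear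
operator on `X`.  Then `T` has a non-trivial closed invariant subspace if and only if there
exists a pair of compatible sequences for `T`. -/
theorem statement0 {𝕜 X : Type*} [RCLike 𝕜] [NormedAddCommGroup X] [NormedSpace 𝕜 X]
    [CompleteSpace X]
    (hrefl : Function.Surjective ⇑(NormedSpace.inclusionInDoubleDual 𝕜 X))
    (hdim : 1 < Module.rank 𝕜 X) (T : X →L[𝕜] X) :
    (∃ Y : Submodule 𝕜 X, IsClosed (Y : Set X) ∧ Y ≠ ⊥ ∧ Y ≠ ⊤ ∧ ∀ y ∈ Y, T y ∈ Y) ↔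
      (∃ (x : ℕ → X) (xs : ℕ → X →L[𝕜] 𝕜), IsCompatible T x xs) :=
  statement0_general hrefl hdim T
end

section
/- Let X be a reflexive Banach space of dimension greater than 1, T a bounded linear operator on X, and suppose there exist compatible sequences (x_n)_{n∈ℕ} ⊆ X and (x_n^*)_{n∈ℕ} ⊆ X^* for T. Then T has a non-trivial closed invariant subspace. -/
/-!
The closed span `Z` of the vectors `T^k x_l` (`1 ≤ k ≤ l`) is a proper subspace: on `Z` the
bounded functionals `x*_m` tend to zero by (c), so `Z = X` would make `(x*_m)` weakly null,
against (b) and reflexivity. By (a), Banach–Alaoglu and reflexivity, `(x_n)` has a weak cluster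
point `y ≠ 0`. For each `k ≥ 1` the vectors `T^k x_n` lie in `Z` once `n ≥ k`, so `T^k y` lies in
the weakly closed subspace `Z`. Hence the closed span of `{T^k y : k ≥ 1}` is a closed invariant
subspace inside `Z ≠ X`; it is non-zero unless `T y = 0`, and then the line through `y` is
invariant and proper because `dim X > 1`.
-/

open Filter Topology

theorem MapClusterPt.eq_of_tendsto {α X : Type*} [TopologicalSpace X] [T2Space X]
    {l : Filter α} {u : α → X} {a b : X} (h : MapClusterPt a l u) (hu : Tendsto u l (𝓝 b)) :
    a = b := by
  by_contra hab
  exact (ClusterPt.mono h hu).ne (disjoint_nhds_nhds.2 hab).eq_bot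

section NormedSpace

variable {𝕜 X : Type*} [RCLike 𝕜] [NormedAddCommGroup X] [NormedSpace 𝕜 X]

theorem Submodule.mem_of_forall_dual_eq_zero {Z : Submodule 𝕜 X} (hZ : IsClosed (Z : Set X))
    {y : X} (h : ∀ f : StrongDual 𝕜 X, (∀ z ∈ Z, f z = 0) → f y = 0) : y ∈ Z := by
  have : IsClosed (Z : Set X) := hZ
  rw [← Submodule.Quotient.mk_eq_zero]
  refine SeparatingDual.eq_zero_of_forall_dual_eq_zero fun g => h (g.comp Z.mkQL) ?_
  intro z hz
  simp [(Submodule.Quotient.mk_eq_zero Z).2 hz]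

theorem tendsto_apply_zero_of_mem_closure_span {ι : Type*} {l : Filter ι}
    {xs : ι → StrongDual 𝕜 X} (hbdd : ∃ C, ∀ i, ‖xs i‖ ≤ C) {S : Set X}
    (hS : ∀ z ∈ S, Tendsto (fun i => xs i z) l (𝓝 0)) {y : X}
    (hy : y ∈ (Submodule.span 𝕜 S).topologicalClosure) :
    Tendsto (fun i => xs i y) l (𝓝 0) := by
  have hclosed : IsClosed {y : X | Tendsto (fun i => xs i y) l (𝓝 0)} :=
    Equicontinuous.isClosed_setOfPred_tendsto
      ((NormedSpace.equicontinuous_TFAE xs).out 5 1 |>.mp hbdd) continuous_const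
  have hspan : (Submodule.span 𝕜 S : Set X) ⊆ {y : X | Tendsto (fun i => xs i y) l (𝓝 0)} :=
    fun y hy => Submodule.span_induction hS (by simpa using tendsto_const_nhds)
      (fun _ _ _ _ ha hb => by simpa using ha.add hb)
      (fun c _ _ ha => by simpa using ha.const_mul c) hy
  exact closure_minimal hspan hclosed hy

theorem exists_ne_zero_mapClusterPt_of_not_tendsto_zero {ι : Type*} {l : Filter ι}
    (hrefl : Function.Surjective (NormedSpace.inclusionInDoubleDual 𝕜 X)) {x : ι → X}
    (hbdd : ∃ C, ∀ i, ‖x i‖ ≤ C)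
    (hnull : ¬ ∀ f : StrongDual 𝕜 X, Tendsto (fun i => f (x i)) l (𝓝 0)) :
    ∃ y ≠ 0, ∀ f : StrongDual 𝕜 X, MapClusterPt (f y) l (fun i => f (x i)) := by
  obtain ⟨C, hC⟩ := hbdd
  let u : ι → WeakDual 𝕜 (StrongDual 𝕜 X) :=
    fun i => StrongDual.toWeakDual (NormedSpace.inclusionInDoubleDual 𝕜 X (x i))
  let K := WeakDual.toStrongDual ⁻¹' Metric.closedBall (0 : StrongDual 𝕜 (StrongDual 𝕜 X)) C
  have hu : ∀ i, u i ∈ K := fun i =>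
    (mem_closedBall_zero_iff (a := WeakDual.toStrongDual (u i))).2
      ((NormedSpace.double_dual_bound 𝕜 X (x i)).trans (hC i))
  obtain ⟨G, -, hGu, hG0⟩ : ∃ G ∈ K, MapClusterPt G l u ∧ G ≠ 0 := by
    by_contra! h
    have hu0 := (WeakDual.isCompact_closedBall 0 C).tendsto_nhds_of_unique_mapClusterPt
      (Eventually.of_forall hu) h
    exact hnull fun f => ((WeakDual.eval_continuous f).tendsto 0).comp hu0
  obtain ⟨y, hy⟩ := hrefl (WeakDual.toStrongDual G)
  refine ⟨y, ?_, fun f => ?_⟩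
  · rintro rfl
    exact hG0 (by simpa using hy.symm)
  · have := hGu.continuousAt_comp (WeakDual.eval_continuous f).continuousAt
    rwa [← WeakDual.toStrongDual_apply, ← hy] at this

variable {T : X →L[𝕜] X}

theorem Submodule.topologicalClosure_le_comap {Y : Submodule 𝕜 X}
    (hY : Y ≤ Y.comap (T : X →ₗ[𝕜] X)) :
    Y.topologicalClosure ≤ Y.topologicalClosure.comap (T : X →ₗ[𝕜] X) :=
  Y.topologicalClosure_minimal (hY.trans (Submodule.comap_mono Y.le_topologicalClosure))
    (Y.isClosed_topologicalClosure.preimage T.continuous)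

theorem exists_invariant_of_iterate_mem {Z : Submodule 𝕜 X}
    (hZ : IsClosed (Z : Set X)) (hZtop : Z ≠ ⊤) (hdim : 1 < Module.rank 𝕜 X) {y : X}
    (hy : y ≠ 0) (hyZ : ∀ k, (T ^ (k + 1)) y ∈ Z) :
    ∃ Y : Submodule 𝕜 X, IsClosed (Y : Set X) ∧ Y ≠ ⊥ ∧ Y ≠ ⊤ ∧ ∀ y ∈ Y, T y ∈ Y := by
  by_cases hTy : T y = 0
  · refine ⟨𝕜 ∙ y, Submodule.closed_of_finiteDimensional _, by simpa using hy, ?_, ?_⟩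
    · intro htop
      have := rank_span_le (R := 𝕜) ({y} : Set X)
      rw [htop, rank_top, Cardinal.mk_singleton] at this
      exact this.not_gt hdim
    · intro z hz
      obtain ⟨c, rfl⟩ := Submodule.mem_span_singleton.1 hz
      simp [hTy]
  let Y := Submodule.span 𝕜 (Set.range fun k => (T ^ (k + 1)) y)
  have hTY : Y ≤ Y.comap (T : X →ₗ[𝕜] X) := Submodule.span_le.2 <| by
    rintro _ ⟨k, rfl⟩
    exact Submodule.subset_span ⟨k + 1, by dsimp only; rw [pow_succ']; rfl⟩
  have hTyY : T y ∈ Y.topologicalClosure :=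
    Y.le_topologicalClosure (Submodule.subset_span ⟨0, by simp⟩)
  refine ⟨Y.topologicalClosure, Y.isClosed_topologicalClosure, ?_, ?_,
    fun z hz => Submodule.topologicalClosure_le_comap hTY hz⟩
  · exact fun hbot => hTy (by simpa [hbot] using hTyY)
  · refine fun htop => hZtop (eq_top_iff.2 (htop ▸ ?_))
    exact Y.topologicalClosure_minimal (Submodule.span_le.2 (Set.range_subset_iff.2 hyZ)) hZ

variable {x : ℕ → X} {xs : ℕ → StrongDual 𝕜 X}

def iterateSpan (T : X →L[𝕜] X) (x : ℕ → X) : Submodule 𝕜 X :=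
  (Submodule.span 𝕜 {z | ∃ k l, 1 ≤ k ∧ k ≤ l ∧ (T ^ k) (x l) = z}).topologicalClosure

namespace IsCompatible

theorem tendsto_apply_of_mem_iterateSpan (h : IsCompatible T x xs) {y : X}
    (hy : y ∈ iterateSpan T x) : Tendsto (fun m => xs m y) atTop (𝓝 0) := by
  obtain ⟨-, hbdd, -, -, ε, -, hε, hεbd⟩ := h
  refine tendsto_apply_zero_of_mem_closure_span hbdd ?_ hy
  rintro _ ⟨k, l, hk, hkl, rfl⟩
  refine squeeze_zero_norm' ?_ hε
  filter_upwards [eventually_ge_atTop l] with m hm using (hεbd k l m hk hkl hm).le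

theorem iterateSpan_ne_top (h : IsCompatible T x xs)
    (hrefl : Function.Surjective (NormedSpace.inclusionInDoubleDual 𝕜 X)) :
    iterateSpan T x ≠ ⊤ := by
  intro htop
  refine h.2.2.2.1 ⟨id, strictMono_id, fun F => ?_⟩
  obtain ⟨y, rfl⟩ := hrefl F
  exact h.tendsto_apply_of_mem_iterateSpan (htop ▸ Submodule.mem_top)

theorem exists_ne_zero_iterate_mem_iterateSpan (h : IsCompatible T x xs)
    (hrefl : Function.Surjective (NormedSpace.inclusionInDoubleDual 𝕜 X)) :
    ∃ y ≠ 0, ∀ k, (T ^ (k + 1)) y ∈ iterateSpan T x := by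
  obtain ⟨y, hy, hcl⟩ := exists_ne_zero_mapClusterPt_of_not_tendsto_zero hrefl h.1
    fun hnull => h.2.2.1 ⟨id, strictMono_id, hnull⟩
  refine ⟨y, hy, fun k => Submodule.mem_of_forall_dual_eq_zero
    (Submodule.isClosed_topologicalClosure _) fun f hf => ?_⟩
  refine (hcl (f.comp (T ^ (k + 1)))).eq_of_tendsto (tendsto_const_nhds.congr' ?_)
  filter_upwards [eventually_ge_atTop (k + 1)] with n hn
  exact (hf _ (Submodule.le_topologicalClosure _
    (Submodule.subset_span ⟨k + 1, n, k.succ_pos, hn, rfl⟩))).symm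

end IsCompatible

end NormedSpace

theorem statement1_general {𝕜 X : Type*} [RCLike 𝕜] [NormedAddCommGroup X] [NormedSpace 𝕜 X]
    (hrefl : Function.Surjective ⇑(NormedSpace.inclusionInDoubleDual 𝕜 X))
    (hdim : 1 < Module.rank 𝕜 X) (T : X →L[𝕜] X)
    (x : ℕ → X) (xs : ℕ → X →L[𝕜] 𝕜) (hcomp : IsCompatible T x xs) :
    ∃ Y : Submodule 𝕜 X, IsClosed (Y : Set X) ∧ Y ≠ ⊥ ∧ Y ≠ ⊤ ∧ ∀ y ∈ Y, T y ∈ Y := by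
  obtain ⟨y, hy, hyZ⟩ := hcomp.exists_ne_zero_iterate_mem_iterateSpan hrefl
  exact exists_invariant_of_iterate_mem (Submodule.isClosed_topologicalClosure _)
    (hcomp.iterateSpan_ne_top hrefl) hdim hy hyZ

/-- If `X` is a reflexive Banach space of dimension greater than 1, `T` a bounded operator
on `X`, and there exist compatible sequences for `T`, then `T` has a non-trivial closed
invariant subspace. -/
theorem statement1 {𝕜 X : Type*} [RCLike 𝕜] [NormedAddCommGroup X] [NormedSpace 𝕜 X]
    [CompleteSpace X]
    (hrefl : Function.Surjective ⇑(NormedSpace.inclusionInDoubleDual 𝕜 X))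
    (hdim : 1 < Module.rank 𝕜 X) (T : X →L[𝕜] X)
    (x : ℕ → X) (xs : ℕ → X →L[𝕜] 𝕜) (hcomp : IsCompatible T x xs) :
    ∃ Y : Submodule 𝕜 X, IsClosed (Y : Set X) ∧ Y ≠ ⊥ ∧ Y ≠ ⊤ ∧ ∀ y ∈ Y, T y ∈ Y :=
  statement1_general hrefl hdim T x xs hcomp
end

section
/- Let X be a Banach space, let A be a nonempty closed convex bounded subset of X which does not contain the origin and has nonempty norm interior, and let x_0 be a point of the norm interior of A. Define B = {x^* ∈ X^* : Re x^*(x) ≥ 0 for all x ∈ A, and Re x^*(x_0) = 1}. Then B is nonempty, norm-bounded, and closed in the weak* topology of X^*. -/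
/-!
A Hahn–Banach separation of the origin from the closed convex set `A` gives a functional whose
real part is positive on `A`; rescaled so that its real part is `1` at `x₀`, it lies in `B`.
If `ball x₀ ε ⊆ A`, then for `f ∈ B` and `‖z‖ < ε` both `x₀ + z` and `x₀ - z` lie in `A`, so
`|Re f z| ≤ 1`; hence `‖Re ∘ f‖ ≤ ε⁻¹`, and `‖f‖ = ‖Re ∘ f‖`. Finally `B` is cut out by
conditions on the evaluations `f ↦ f x`, which are weak* continuous.
-/

open RCLike Metric Set

def normalizedDualCone (𝕜 : Type*) {X : Type*} [RCLike 𝕜] [NormedAddCommGroup X]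
    [NormedSpace 𝕜 X] (A : Set X) (x₀ : X) : Set (StrongDual 𝕜 X) :=
  {f | (∀ x ∈ A, 0 ≤ re (f x)) ∧ re (f x₀) = 1}

section

variable {𝕜 X : Type*} [RCLike 𝕜] [NormedAddCommGroup X] [NormedSpace 𝕜 X]

variable {A : Set X} {x₀ : X}

theorem abs_re_le_one_of_mem_normalizedDualCone {ε : ℝ} (hball : ball x₀ ε ⊆ A)
    {f : StrongDual 𝕜 X} (hf : f ∈ normalizedDualCone 𝕜 A x₀) {z : X} (hz : ‖z‖ < ε) :
    |re (f z)| ≤ 1 := by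
  obtain ⟨hnonneg, hx₀⟩ := hf
  have hadd := hnonneg (x₀ + z) (hball (by simpa [dist_eq_norm] using hz))
  have hsub := hnonneg (x₀ - z) (hball (by simpa [dist_eq_norm] using hz))
  rw [map_add, map_add, hx₀] at hadd
  rw [map_sub, map_sub, hx₀] at hsub
  exact abs_le.2 ⟨by linarith, by linarith⟩

section RealStructure

variable [NormedSpace ℝ X] [IsScalarTower ℝ 𝕜 X]

theorem normalizedDualCone_nonempty (hconv : Convex ℝ A) (hclosed : IsClosed A)
    (h0 : (0 : X) ∉ A) (hx₀ : x₀ ∈ A) : (normalizedDualCone 𝕜 A x₀).Nonempty := by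
  obtain ⟨g, u, hgu, hg⟩ := RCLike.geometric_hahn_banach_point_closed (𝕜 := 𝕜) hconv hclosed h0
  rw [map_zero, map_zero] at hgu
  have hpos : ∀ x ∈ A, 0 < re (g x) := fun x hx => hgu.trans (hg x hx)
  refine ⟨((re (g x₀))⁻¹ : ℝ) • g, fun x hx => ?_, ?_⟩
  · simpa [smul_re] using (mul_pos (inv_pos.2 (hpos x₀ hx₀)) (hpos x hx)).le
  · simp [smul_re, inv_mul_cancel₀ (hpos x₀ hx₀).ne']

theorem norm_le_of_mem_normalizedDualCone {ε : ℝ} (hε : 0 < ε) (hball : ball x₀ ε ⊆ A)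
    {f : StrongDual 𝕜 X} (hf : f ∈ normalizedDualCone 𝕜 A x₀) : ‖f‖ ≤ ε⁻¹ := by
  have hpolar : reCLM.comp (f.restrictScalars ℝ) ∈ StrongDual.polar ℝ (ball (0 : X) ε) :=
    fun z hz => abs_re_le_one_of_mem_normalizedDualCone hball hf (mem_ball_zero_iff.1 hz)
  rw [NormedSpace.polar_ball hε, mem_closedBall_zero_iff,
    ← StrongDual.extendRCLikeₗᵢ_symm_apply, LinearIsometryEquiv.norm_map] at hpolar
  exact hpolar

theorem isBounded_normalizedDualCone (hx₀ : x₀ ∈ interior A) :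
    Bornology.IsBounded (normalizedDualCone 𝕜 A x₀) := by
  obtain ⟨ε, hε, hball⟩ := isOpen_iff.1 isOpen_interior x₀ hx₀
  refine isBounded_closedBall (x := (0 : StrongDual 𝕜 X)) (r := ε⁻¹) |>.subset fun f hf => ?_
  exact mem_closedBall_zero_iff.2
    (norm_le_of_mem_normalizedDualCone hε (hball.trans interior_subset) hf)

end RealStructure

theorem isClosed_toWeakDual_image_normalizedDualCone :
    IsClosed (StrongDual.toWeakDual '' normalizedDualCone 𝕜 A x₀ : Set (WeakDual 𝕜 X)) := by
  have hre_eval : ∀ x : X, Continuous fun φ : WeakDual 𝕜 X => re (φ x) :=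
    fun x => continuous_re.comp (WeakDual.eval_continuous x)
  rw [LinearEquiv.image_eq_preimage_symm]
  refine IsClosed.inter ?_ (isClosed_eq (hre_eval x₀) continuous_const)
  show IsClosed {φ : WeakDual 𝕜 X | ∀ x ∈ A, 0 ≤ re (φ x)}
  simp only [ofPred_forall]
  exact isClosed_biInter fun x _ => isClosed_le continuous_const (hre_eval x)

end

theorem statement5_general {𝕜 X : Type*} [RCLike 𝕜] [NormedAddCommGroup X] [NormedSpace 𝕜 X]
    [NormedSpace ℝ X] [IsScalarTower ℝ 𝕜 X]
    (A : Set X) (hclosed : IsClosed A) (hconv : Convex ℝ A)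
    (h0 : (0 : X) ∉ A)
    (x0 : X) (hx0 : x0 ∈ interior A)
    (B : Set (X →L[𝕜] 𝕜))
    (hB : B = {f : X →L[𝕜] 𝕜 | (∀ x ∈ A, 0 ≤ RCLike.re (f x)) ∧ RCLike.re (f x0) = 1}) :
    B.Nonempty ∧ Bornology.IsBounded B ∧
      IsClosed (StrongDual.toWeakDual '' B : Set (WeakDual 𝕜 X)) := by
  change B = normalizedDualCone 𝕜 A x0 at hB
  subst hB
  exact ⟨normalizedDualCone_nonempty hconv hclosed h0 (interior_subset hx0),
    isBounded_normalizedDualCone hx0, isClosed_toWeakDual_image_normalizedDualCone⟩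

/-- Let `X` be a Banach space, `A` a nonempty closed convex bounded subset of `X` not
containing the origin and with nonempty norm interior, and `x₀` a point of the norm interior
of `A`.  Then `B = {x* ∈ X* : Re x*(x) ≥ 0 for all x ∈ A, and Re x*(x₀) = 1}` is nonempty,
norm-bounded, and closed in the weak* topology of `X*`. -/
theorem statement5 {𝕜 X : Type*} [RCLike 𝕜] [NormedAddCommGroup X] [NormedSpace 𝕜 X]
    [NormedSpace ℝ X] [IsScalarTower ℝ 𝕜 X] [CompleteSpace X]
    (A : Set X) (hne : A.Nonempty) (hclosed : IsClosed A) (hconv : Convex ℝ A)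
    (hbdd : Bornology.IsBounded A) (h0 : (0 : X) ∉ A)
    (x0 : X) (hx0 : x0 ∈ interior A)
    (B : Set (X →L[𝕜] 𝕜))
    (hB : B = {f : X →L[𝕜] 𝕜 | (∀ x ∈ A, 0 ≤ RCLike.re (f x)) ∧ RCLike.re (f x0) = 1}) :
    B.Nonempty ∧ Bornology.IsBounded B ∧
      IsClosed (StrongDual.toWeakDual '' B : Set (WeakDual 𝕜 X)) :=
  statement5_general A hclosed hconv h0 x0 hx0 B hB
end

section
/- Let X be a complex Banach space, T a bounded linear operator on X, A a nonempty closed convex bounded subset of X which does not contain the origin and has nonempty norm interior, x_0 a point of the norm interior of A, and B = {x^* ∈ X^* : Re x^*(x) ≥ 0 for all x ∈ A, and Re x^*(x_0) = 1}. Suppose (x_n)_{n∈ℕ} ⊆ A is a sequence and m ∈ ℕ is such that B ⊆ ⋃_{ℓ=1}^m ⋃_{k=1}^ℓ {x^* ∈ X^* : |x^*(T^k x_ℓ)| ≥ 1/m}. Then the linear span of {T^k x_ℓ : 1 ≤ ℓ ≤ m, 1 ≤ k ≤ ℓ} has nonempty intersection with the norm interior of A. -/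
/-!
Suppose the span `Y` of the vectors `T^k x_ℓ` misses `int A`. Complex Hahn–Banach separates the
open convex set `int A` from the subspace `Y` by a functional `f` whose real part is bounded below on
`Y`, hence vanishes on `Y`, and is negative on `int A`, hence nonpositive on
`A ⊆ closure (int A)`. Divided by the negative number `Re f(x₀)`, it lies in `B` and
annihilates every `T^k x_ℓ`, contradicting the covering hypothesis.
-/

open RCLike

theorem map_eq_zero_of_forall_le_re_map {𝕜 E : Type*} [RCLike 𝕜] [AddCommGroup E]
    [Module 𝕜 E] (f : E →ₗ[𝕜] 𝕜) (Y : Submodule 𝕜 E) {u : ℝ}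
    (hu : ∀ y ∈ Y, u ≤ re (f y)) {y : E} (hy : y ∈ Y) : f y = 0 := by
  by_contra hfy
  have := hu (((u - 1 : ℝ) / f y : 𝕜) • y) (Y.smul_mem _ hy)
  rw [map_smul, smul_eq_mul, div_mul_cancel₀ _ hfy, ofReal_re] at this
  linarith

section

variable {𝕜 E : Type*} [RCLike 𝕜] [NormedAddCommGroup E] [NormedSpace 𝕜 E]
  [NormedSpace ℝ E]

theorem re_map_nonpos_of_forall_re_map_neg_interior {A : Set E} (hA : Convex ℝ A)
    (hint : (interior A).Nonempty) (f : StrongDual 𝕜 E)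
    (hf : ∀ a ∈ interior A, re (f a) < 0) {x : E} (hx : x ∈ A) : re (f x) ≤ 0 := by
  have hcont : Continuous fun z => re (f z) := continuous_re.comp f.continuous
  have hx' : x ∈ closure (interior A) := by
    rw [hA.closure_interior_eq_closure_of_nonempty_interior hint]
    exact subset_closure hx
  exact closure_minimal (fun a ha => (hf a ha).le) (isClosed_le hcont continuous_const) hx'

theorem exists_dual_vanishing_on_submodule_of_disjoint_interior {A : Set E} (hA : Convex ℝ A)
    {x₀ : E} (hx₀ : x₀ ∈ interior A) (Y : Submodule 𝕜 E)
    [IsScalarTower ℝ 𝕜 E] (hY : Disjoint (interior A) (Y : Set E)) :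
    ∃ g : StrongDual 𝕜 E, (∀ x ∈ A, 0 ≤ re (g x)) ∧ re (g x₀) = 1 ∧ ∀ y ∈ Y, g y = 0 := by
  obtain ⟨f, u, hfA, hfY⟩ := RCLike.geometric_hahn_banach_open (𝕜 := 𝕜) hA.interior
    isOpen_interior (Y.restrictScalars ℝ).convex hY
  have hf0 : ∀ y ∈ Y, f y = 0 := fun y hy =>
    map_eq_zero_of_forall_le_re_map f.toLinearMap Y hfY hy
  have hu : u ≤ 0 := by simpa using hfY 0 Y.zero_mem
  have hfA' : ∀ a ∈ interior A, re (f a) < 0 := fun a ha => (hfA a ha).trans_le hu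
  set r := re (f x₀)
  have hr : r < 0 := hfA' x₀ hx₀
  refine ⟨(r⁻¹ : 𝕜) • f, fun x hx => ?_, ?_, fun y hy => by simp [hf0 y hy]⟩
  · have := re_map_nonpos_of_forall_re_map_neg_interior hA ⟨x₀, hx₀⟩ f hfA' hx
    simp only [smul_apply, smul_eq_mul, ← ofReal_inv, re_ofReal_mul]
    exact mul_nonneg_of_nonpos_of_nonpos (inv_nonpos.2 hr.le) this
  · simp only [smul_apply, smul_eq_mul, ← ofReal_inv, re_ofReal_mul]
    exact inv_mul_cancel₀ hr.ne

end

theorem statement6_general {X : Type*} [NormedAddCommGroup X] [NormedSpace ℂ X]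
    (T : X →L[ℂ] X)
    (A : Set X) (hconv : Convex ℝ A)
    (x0 : X) (hx0 : x0 ∈ interior A)
    (B : Set (X →L[ℂ] ℂ))
    (hB : B = {f : X →L[ℂ] ℂ | (∀ x ∈ A, 0 ≤ (f x).re) ∧ (f x0).re = 1})
    (x : ℕ → X) (m : ℕ) (hm : 1 ≤ m)
    (hcover : B ⊆ ⋃ ℓ ∈ Finset.Icc 1 m, ⋃ k ∈ Finset.Icc 1 ℓ,
        {f : X →L[ℂ] ℂ | (m : ℝ)⁻¹ ≤ ‖f ((T ^ k) (x ℓ))‖}) :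
    (((Submodule.span ℂ
        {y : X | ∃ k ℓ : ℕ, 1 ≤ k ∧ k ≤ ℓ ∧ ℓ ≤ m ∧ y = (T ^ k) (x ℓ)}) : Set X)
      ∩ interior A).Nonempty := by
  by_contra hdisj
  rw [Set.not_nonempty_iff_eq_empty, ← Set.disjoint_iff_inter_eq_empty] at hdisj
  obtain ⟨g, hgA, hgx₀, hgY⟩ :=
    exists_dual_vanishing_on_submodule_of_disjoint_interior hconv hx0 _ hdisj.symm
  have hgB : g ∈ B := hB ▸ ⟨hgA, hgx₀⟩
  have hg := hcover hgB
  simp only [Set.mem_iUnion, Finset.mem_Icc, Set.mem_ofPred_eq, exists_prop] at hg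
  obtain ⟨ℓ, ⟨-, hℓm⟩, k, ⟨hk, hkℓ⟩, hgk⟩ := hg
  rw [hgY _ (Submodule.subset_span ⟨k, ℓ, hk, hkℓ, hℓm, rfl⟩), norm_zero] at hgk
  exact hgk.not_gt (by positivity)

/-- Let `X` be a complex Banach space, `T` a bounded operator on `X`, `A` a nonempty closed
convex bounded subset of `X` not containing the origin with nonempty norm interior, `x₀` a
point of the norm interior of `A`, and
`B = {x* ∈ X* : Re x*(x) ≥ 0 for all x ∈ A, and Re x*(x₀) = 1}`.  If `(x n) ⊆ A` and `m ∈ ℕ`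
are such that `B ⊆ ⋃_{ℓ=1}^m ⋃_{k=1}^ℓ {x* : |x*(T^k x_ℓ)| ≥ 1/m}`, then the linear span of
`{T^k x_ℓ : 1 ≤ ℓ ≤ m, 1 ≤ k ≤ ℓ}` meets the norm interior of `A`. -/
theorem statement6 {X : Type*} [NormedAddCommGroup X] [NormedSpace ℂ X] [CompleteSpace X]
    (T : X →L[ℂ] X)
    (A : Set X) (hne : A.Nonempty) (hclosed : IsClosed A) (hconv : Convex ℝ A)
    (hbdd : Bornology.IsBounded A) (h0 : (0 : X) ∉ A)
    (x0 : X) (hx0 : x0 ∈ interior A)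
    (B : Set (X →L[ℂ] ℂ))
    (hB : B = {f : X →L[ℂ] ℂ | (∀ x ∈ A, 0 ≤ (f x).re) ∧ (f x0).re = 1})
    (x : ℕ → X) (hx : ∀ n, x n ∈ A) (m : ℕ) (hm : 1 ≤ m)
    (hcover : B ⊆ ⋃ ℓ ∈ Finset.Icc 1 m, ⋃ k ∈ Finset.Icc 1 ℓ,
        {f : X →L[ℂ] ℂ | (m : ℝ)⁻¹ ≤ ‖f ((T ^ k) (x ℓ))‖}) :
    (((Submodule.span ℂ
        {y : X | ∃ k ℓ : ℕ, 1 ≤ k ∧ k ≤ ℓ ∧ ℓ ≤ m ∧ y = (T ^ k) (x ℓ)}) : Set X)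
      ∩ interior A).Nonempty :=
  statement6_general T A hconv x0 hx0 B hB x m hm hcover
end

section
/- Every compact bounded linear operator on a complex reflexive Banach space of dimension greater than 1 has a non-trivial closed invariant subspace. That is, if X is a complex reflexive Banach space with dim X > 1 and T : X → X is a compact bounded linear operator, then there exists a closed linear subspace Y of X with {0} ⊊ Y ⊊ X and T(Y) ⊆ Y. -/
/-!
Hilden's argument. An eigenvector spans a one-dimensional invariant subspace, which is proper since
`dim X > 1`, and for `y ≠ 0` the closure of `{p(T) y | p polynomial}` is a nonzero closed invariant
subspace, proper unless it is everything. So assume all these orbits are dense and `T ≠ 0`. Pick a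
ball `B = closedBall x₀ 1` with `0 ∉ B` and `0 ∉ closure (T B)`. The latter set is compact and
covered by the open sets `p(T)⁻¹ (ball x₀ 1)`, hence by finitely many of them, say for
`p₁, …, pₘ`. Starting from `x₀` and applying `T` followed by a suitable `pᵢ(T)` `k` times shows that
`q(T) T^k x₀ ∈ B` for a polynomial `q` with `‖q(T)‖ ≤ c^k`, `c = max ‖pᵢ(T)‖`. Thus
`‖T^k‖ ≥ ‖x₀‖⁻¹ c^{-k}`, so by Gelfand's formula the spectral radius of `T` is positive, and by the
Fredholm alternative `T` has an eigenvalue after all.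
-/

open Polynomial Metric Set Filter Topology
open scoped ENNReal NNReal

namespace spectrum

theorem le_spectralRadius_of_eventually_pow_le_nnnorm_pow {A : Type*} [NormedRing A]
    [NormedAlgebra ℂ A] [CompleteSpace A] {a : A} {ρ : ℝ≥0}
    (h : ∀ᶠ n in atTop, ρ ^ n ≤ ‖a ^ n‖₊) : (ρ : ℝ≥0∞) ≤ spectralRadius ℂ a := by
  refine ge_of_tendsto (spectrum.pow_nnnorm_pow_one_div_tendsto_nhds_spectralRadius a) ?_
  filter_upwards [h, eventually_ne_atTop 0] with n hn hn0
  calc (ρ : ℝ≥0∞) = ((ρ ^ n : ℝ≥0) : ℝ≥0∞) ^ (1 / n : ℝ) := by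
        rw [ENNReal.coe_pow, ← ENNReal.rpow_natCast, ← ENNReal.rpow_mul,
          mul_one_div_cancel (Nat.cast_ne_zero.2 hn0), ENNReal.rpow_one]
    _ ≤ (‖a ^ n‖₊ : ℝ≥0∞) ^ (1 / n : ℝ) := by gcongr

theorem spectralRadius_pos_of_mul_pow_le_norm_pow {A : Type*} [NormedRing A]
    [NormedAlgebra ℂ A] [CompleteSpace A] {a : A} {C r : ℝ} (hC : 0 < C) (hr : 0 < r)
    (h : ∀ n, C * r ^ n ≤ ‖a ^ n‖) : 0 < spectralRadius ℂ a := by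
  set ρ : ℝ≥0 := ⟨min C 1 * r, by positivity⟩
  have hρ : 0 < ρ := by change (0 : ℝ) < min C 1 * r; positivity
  refine (ENNReal.coe_pos.2 hρ).trans_le (le_spectralRadius_of_eventually_pow_le_nnnorm_pow ?_)
  filter_upwards [eventually_ne_atTop 0] with n hn
  rw [← NNReal.coe_le_coe, NNReal.coe_pow, coe_nnnorm]
  calc (min C 1 * r) ^ n = min C 1 ^ n * r ^ n := mul_pow _ _ _
    _ ≤ min C 1 * r ^ n := by
        gcongr
        exact pow_le_of_le_one (by positivity) (min_le_right _ _) hn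
    _ ≤ C * r ^ n := by gcongr; exact min_le_left _ _
    _ ≤ ‖a ^ n‖ := h n

end spectrum

section

variable {𝕜 E F : Type*} [NontriviallyNormedField 𝕜] [NormedAddCommGroup E] [NormedSpace 𝕜 E]
  [NormedAddCommGroup F] [NormedSpace 𝕜 F]

theorem ContinuousLinearMap.exists_lt_norm_and_lt_norm_apply {T : E →L[𝕜] F} (hT : T ≠ 0)
    (R : ℝ) : ∃ x, R < ‖x‖ ∧ R < ‖T x‖ := by
  obtain ⟨w, hw⟩ : ∃ w, T w ≠ 0 := by
    by_contra! h
    exact hT (ContinuousLinearMap.ext h)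
  have hw0 : 0 < ‖w‖ := norm_pos_iff.2 fun h => hw (by rw [h, map_zero])
  have hTw0 : 0 < ‖T w‖ := norm_pos_iff.2 hw
  obtain ⟨c, hc⟩ := NormedField.exists_lt_norm 𝕜 (max (R / ‖w‖) (R / ‖T w‖))
  refine ⟨c • w, ?_, ?_⟩
  · rw [norm_smul, ← div_lt_iff₀ hw0]
    exact (le_max_left _ _).trans_lt hc
  · rw [map_smul, norm_smul, ← div_lt_iff₀ hTw0]
    exact (le_max_right _ _).trans_lt hc

theorem exists_aeval_mul_X_pow_mem {T : E →L[𝕜] E} {B : Set E} {s : Finset 𝕜[X]} {c : ℝ}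
    (hc : ∀ p ∈ s, ‖aeval T p‖ ≤ c) (hB : ∀ v ∈ B, ∃ p ∈ s, aeval T p (T v) ∈ B) {x : E}
    (hx : x ∈ B) (k : ℕ) : ∃ q : 𝕜[X], ‖aeval T q‖ ≤ c ^ k ∧ aeval T (q * X ^ k) x ∈ B := by
  induction k with
  | zero =>
    exact ⟨1, by rw [map_one, pow_zero]; exact ContinuousLinearMap.norm_id_le, by simpa using hx⟩
  | succ k ih =>
    obtain ⟨q, hq, hqx⟩ := ih
    obtain ⟨p, hps, hp⟩ := hB _ hqx
    refine ⟨p * q, ?_, ?_⟩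
    · calc ‖aeval T (p * q)‖ ≤ ‖aeval T p‖ * ‖aeval T q‖ := by
            rw [map_mul]; exact norm_mul_le _ _
        _ ≤ c * c ^ k := by
            gcongr
            · exact (norm_nonneg _).trans (hc p hps)
            · exact hc p hps
        _ = c ^ (k + 1) := (pow_succ' c k).symm
    · convert hp using 1
      rw [show p * q * X ^ (k + 1) = p * (X * (q * X ^ k)) by ring, map_mul, map_mul, aeval_X]
      rfl

noncomputable def cyclicSubspace (T : E →L[𝕜] E) (y : E) : Submodule 𝕜 E :=
  LinearMap.range ((ContinuousLinearMap.apply 𝕜 E y).toLinearMap ∘ₗ (aeval T).toLinearMap)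

theorem self_mem_cyclicSubspace (T : E →L[𝕜] E) (y : E) : y ∈ cyclicSubspace T y :=
  ⟨1, by simp⟩

theorem apply_mem_cyclicSubspace {T : E →L[𝕜] E} {y z : E} (hz : z ∈ cyclicSubspace T y) :
    T z ∈ cyclicSubspace T y := by
  obtain ⟨p, rfl⟩ := hz
  exact ⟨X * p, by simp⟩

theorem apply_mem_topologicalClosure_of_forall_apply_mem {T : E →L[𝕜] E} {W : Submodule 𝕜 E}
    (hW : ∀ w ∈ W, T w ∈ W) {z : E} (hz : z ∈ W.topologicalClosure) :
    T z ∈ W.topologicalClosure :=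
  Submodule.topologicalClosure_mono (Submodule.map_le_iff_le_comap.2 fun w hw => hW w hw)
    (Submodule.topologicalClosure_map T W ⟨z, hz, rfl⟩)

theorem exists_closed_invariant_of_not_dense_cyclicSubspace {T : E →L[𝕜] E} {y : E} (hy : y ≠ 0)
    (hdense : ¬ Dense (cyclicSubspace T y : Set E)) :
    ∃ Y : Submodule 𝕜 E, IsClosed (Y : Set E) ∧ Y ≠ ⊥ ∧ Y ≠ ⊤ ∧ ∀ z ∈ Y, T z ∈ Y := by
  set W := cyclicSubspace T y
  refine ⟨W.topologicalClosure, W.isClosed_topologicalClosure, ?_, ?_,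
    fun z hz => apply_mem_topologicalClosure_of_forall_apply_mem
      (fun _ => apply_mem_cyclicSubspace) hz⟩
  · exact (Submodule.ne_bot_iff _).2
      ⟨y, W.le_topologicalClosure (self_mem_cyclicSubspace T y), hy⟩
  · rwa [Ne, ← Submodule.dense_iff_topologicalClosure_eq_top]

theorem exists_closed_invariant_of_hasEigenvector [CompleteSpace 𝕜]
    (hdim : 1 < Module.rank 𝕜 E) {T : E →L[𝕜] E} {μ : 𝕜} {v : E}
    (hv : Module.End.HasEigenvector (T : Module.End 𝕜 E) μ v) :
    ∃ Y : Submodule 𝕜 E, IsClosed (Y : Set E) ∧ Y ≠ ⊥ ∧ Y ≠ ⊤ ∧ ∀ z ∈ Y, T z ∈ Y := by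
  refine ⟨𝕜 ∙ v, (𝕜 ∙ v).closed_of_finiteDimensional, ?_, ?_, fun z hz => ?_⟩
  · simpa [Submodule.span_singleton_eq_bot] using hv.2
  · intro h
    have := rank_span_le (R := 𝕜) ({v} : Set E)
    rw [h, rank_top] at this
    exact hdim.not_ge (by simpa using this)
  · obtain ⟨c, rfl⟩ := Submodule.mem_span_singleton.1 hz
    rw [map_smul]
    exact Submodule.smul_mem _ _ (Submodule.mem_span_singleton.2 ⟨μ, hv.apply_eq_smul.symm⟩)

theorem IsCompactOperator.exists_finset_aeval_apply_mem_closedBall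
    {T : E →L[𝕜] E} (hT : IsCompactOperator T)
    (hcyc : ∀ y ≠ 0, Dense (cyclicSubspace T y : Set E)) {x₀ : E} (hx₀ : ‖T‖ < ‖T x₀‖) :
    ∃ s : Finset 𝕜[X], ∀ v ∈ closedBall x₀ 1, ∃ p ∈ s, aeval T p (T v) ∈ closedBall x₀ 1 := by
  set K := closure (T '' closedBall x₀ 1)
  have hK : IsCompact K := hT.isCompact_closure_image_of_bounded isBounded_closedBall
  have hK_norm : K ⊆ {u | ‖T x₀‖ - ‖T‖ ≤ ‖u‖} := by
    refine closure_minimal ?_ (isClosed_le continuous_const continuous_norm)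
    rintro _ ⟨v, hv, rfl⟩
    have : ‖T x₀ - T v‖ ≤ ‖T‖ := by
      rw [← map_sub]
      simpa using T.le_opNorm_of_le (by rwa [← dist_eq_norm, dist_comm] : ‖x₀ - v‖ ≤ 1)
    have := norm_sub_norm_le (T x₀) (T v)
    simp only [mem_ofPred_eq]
    linarith
  have hK_cover : K ⊆ ⋃ p : 𝕜[X], (aeval T p : E → E) ⁻¹' ball x₀ 1 := by
    intro u hu
    have hu0 : u ≠ 0 := by
      rintro rfl
      have := hK_norm hu
      simp only [mem_ofPred_eq, norm_zero] at this
      linarith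
    obtain ⟨_, ⟨p, rfl⟩, hp⟩ := Metric.mem_closure_iff.1 (hcyc u hu0 x₀) 1 one_pos
    exact mem_iUnion.2 ⟨p, mem_ball'.2 hp⟩
  obtain ⟨s, hs⟩ := hK.elim_finite_subcover _
    (fun p => isOpen_ball.preimage (aeval T p).continuous) hK_cover
  refine ⟨s, fun v hv => ?_⟩
  obtain ⟨p, hps, hp⟩ := mem_iUnion₂.1 (hs (subset_closure ⟨v, hv, rfl⟩))
  exact ⟨p, hps, ball_subset_closedBall hp⟩

end

section

variable {E : Type*} [NormedAddCommGroup E] [NormedSpace ℂ E] [CompleteSpace E] {T : E →L[ℂ] E}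

theorem IsCompactOperator.spectralRadius_pos_of_forall_dense_cyclicSubspace
    (hT : IsCompactOperator T) (hT0 : T ≠ 0)
    (hcyc : ∀ y ≠ 0, Dense (cyclicSubspace T y : Set E)) : 0 < spectralRadius ℂ T := by
  -- `2 < ‖x₀‖` keeps `closedBall x₀ 1` away from `0`; `‖T‖ < ‖T x₀‖` does the same for its image.
  obtain ⟨x₀, hx₀, hTx₀⟩ := T.exists_lt_norm_and_lt_norm_apply hT0 (max 2 ‖T‖)
  obtain ⟨s, hs⟩ :=
    hT.exists_finset_aeval_apply_mem_closedBall hcyc ((le_max_right _ _).trans_lt hTx₀)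
  set c : ℝ := max 1 (∑ p ∈ s, ‖aeval T p‖)
  have hc : ∀ p ∈ s, ‖aeval T p‖ ≤ c := fun p hp =>
    (Finset.single_le_sum (fun _ _ => norm_nonneg _) hp).trans (le_max_right _ _)
  have hc0 : 0 < c := one_pos.trans_le (le_max_left _ _)
  have hx₀0 : 0 < ‖x₀‖ := by linarith [le_max_left 2 ‖T‖]
  refine spectrum.spectralRadius_pos_of_mul_pow_le_norm_pow (inv_pos.2 hx₀0) (inv_pos.2 hc0)
    fun k => ?_
  obtain ⟨q, hq, hqx⟩ := exists_aeval_mul_X_pow_mem hc hs (mem_closedBall_self zero_le_one) k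
  have h_lower : 1 ≤ ‖aeval T (q * X ^ k) x₀‖ := by
    have := norm_sub_norm_le x₀ (aeval T (q * X ^ k) x₀)
    rw [← dist_eq_norm, dist_comm] at this
    linarith [mem_closedBall.1 hqx, le_max_left 2 ‖T‖]
  have h_upper : ‖aeval T (q * X ^ k) x₀‖ ≤ c ^ k * ‖T ^ k‖ * ‖x₀‖ := by
    rw [map_mul, aeval_X_pow]
    calc ‖(aeval T q * T ^ k) x₀‖ ≤ ‖aeval T q * T ^ k‖ * ‖x₀‖ := (aeval T q * T ^ k).le_opNorm _
      _ ≤ c ^ k * ‖T ^ k‖ * ‖x₀‖ := by gcongr; exact (norm_mul_le _ _).trans (by gcongr)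
  rw [inv_pow, ← mul_inv, inv_le_iff_one_le_mul₀ (by positivity)]
  linarith

theorem IsCompactOperator.exists_hasEigenvalue_of_spectralRadius_pos
    (hT : IsCompactOperator T) (h : 0 < spectralRadius ℂ T) :
    ∃ μ, Module.End.HasEigenvalue (T : Module.End ℂ E) μ := by
  obtain ⟨μ, hμ, hμ0⟩ : ∃ μ ∈ spectrum ℂ T, (0 : ℝ≥0∞) < ‖μ‖₊ := by
    simpa only [spectralRadius, lt_iSup_iff, exists_prop] using h
  exact ⟨μ, (hT.hasEigenvalue_iff_mem_spectrum (by simpa using hμ0)).2 hμ⟩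

end

theorem statement8_general {X : Type*} [NormedAddCommGroup X] [NormedSpace ℂ X] [CompleteSpace X]
    (hdim : 1 < Module.rank ℂ X)
    (T : X →L[ℂ] X) (hT : IsCompactOperator ⇑T) :
    ∃ Y : Submodule ℂ X, IsClosed (Y : Set X) ∧ Y ≠ ⊥ ∧ Y ≠ ⊤ ∧ ∀ y ∈ Y, T y ∈ Y := by
  by_cases hev : ∃ μ, Module.End.HasEigenvalue (T : Module.End ℂ X) μ
  · obtain ⟨μ, hμ⟩ := hev
    obtain ⟨v, hv⟩ := hμ.exists_hasEigenvector
    exact exists_closed_invariant_of_hasEigenvector hdim hv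
  by_cases hcyc : ∀ y ≠ 0, Dense (cyclicSubspace T y : Set X)
  · have : Nontrivial X := rank_pos_iff_nontrivial.1 (zero_lt_one.trans hdim)
    have hT0 : T ≠ 0 := by
      rintro rfl
      obtain ⟨v, hv⟩ := exists_ne (0 : X)
      exact hev ⟨0, Module.End.hasEigenvalue_of_hasEigenvector ⟨by simp, hv⟩⟩
    exact absurd (hT.exists_hasEigenvalue_of_spectralRadius_pos
      (hT.spectralRadius_pos_of_forall_dense_cyclicSubspace hT0 hcyc)) hev
  push Not at hcyc
  obtain ⟨y, hy, hdense⟩ := hcyc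
  exact exists_closed_invariant_of_not_dense_cyclicSubspace hy hdense

/-- Every compact bounded linear operator on a complex reflexive Banach space of dimension
greater than 1 has a non-trivial closed invariant subspace. -/
theorem statement8 {X : Type*} [NormedAddCommGroup X] [NormedSpace ℂ X] [CompleteSpace X]
    (hrefl : Function.Surjective ⇑(NormedSpace.inclusionInDoubleDual ℂ X))
    (hdim : 1 < Module.rank ℂ X)
    (T : X →L[ℂ] X) (hT : IsCompactOperator ⇑T) :
    ∃ Y : Submodule ℂ X, IsClosed (Y : Set X) ∧ Y ≠ ⊥ ∧ Y ≠ ⊤ ∧ ∀ y ∈ Y, T y ∈ Y :=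
  statement8_general hdim T hT
end

section
/- Let X be a reflexive Banach space of dimension greater than 1, T a bounded linear operator on X, and A any closed ball of X (A = {x ∈ X : ‖x − c‖ ≤ r} for some c ∈ X and r > 0). Then at least one of the following holds: (i) there exists v ∈ A such that Tv = 0; (ii) there exists v ∈ A such that the closed linear span of Orb_T(Tv) is a non-trivial closed invariant subspace of T; (iii) for every sequence (x_n)_{n∈ℕ} ∈ A^ℕ, A is contained in the closed linear span of {T^k x_ℓ : ℓ ∈ ℕ, 1 ≤ k ≤ ℓ}. -/
/-!
If (iii) fails, there are a sequence `x` in the ball `A` and a point `a ∈ A` outside the closed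
span `M` of `{T^k x_ℓ : 1 ≤ k ≤ ℓ}`. By reflexivity `A` is weakly compact, so `x` has a weak
cluster point `v ∈ A`. The closed subspace `M` is weakly closed and `T^k` is weakly continuous;
as `T^k x_ℓ ∈ M` for all `ℓ ≥ k`, also `T^k v ∈ M` for every `k ≥ 1`. So the closed span of the
orbit of `Tv` lies in `M ∌ a`: it is a proper invariant subspace, and it is nonzero unless
`Tv = 0`.
-/

open NormedSpace Metric Filter Set

section

variable {𝕜 X : Type*} [RCLike 𝕜] [NormedAddCommGroup X] [NormedSpace 𝕜 X]

theorem Submodule.exists_dual_eq_zero_on_of_notMem {M : Submodule 𝕜 X}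
    (hM : IsClosed (M : Set X)) {a : X} (ha : a ∉ M) :
    ∃ f : StrongDual 𝕜 X, (∀ m ∈ M, f m = 0) ∧ f a ≠ 0 := by
  have := hM
  obtain ⟨g, hg⟩ := SeparatingDual.exists_ne_zero (R := 𝕜) (x := M.mkQ a)
    (by simpa [Submodule.Quotient.mk_eq_zero] using ha)
  exact ⟨g.comp M.mkQL, fun m hm => by simp [(Submodule.Quotient.mk_eq_zero M).2 hm], hg⟩

theorem Submodule.isClosed_toWeakSpace_image {M : Submodule 𝕜 X} (hM : IsClosed (M : Set X)) :
    IsClosed (toWeakSpace 𝕜 X '' M) := by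
  refine isClosed_of_closure_subset fun z hz => ?_
  by_contra hzM
  obtain ⟨f, hfM, hfz⟩ := M.exists_dual_eq_zero_on_of_notMem hM
    (a := (toWeakSpace 𝕜 X).symm z) fun h => hzM ⟨_, h, by simp⟩
  have hf : Continuous fun z : WeakSpace 𝕜 X => f ((toWeakSpace 𝕜 X).symm z) :=
    WeakBilin.eval_continuous _ f
  refine hfz (closure_minimal ?_ (isClosed_eq hf continuous_const) hz)
  rintro _ ⟨m, hm, rfl⟩
  simpa using hfM m hm

theorem isCompact_toWeakSpace_closedBall
    (hrefl : Function.Surjective (inclusionInDoubleDual 𝕜 X)) (c : X) (r : ℝ) :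
    IsCompact (toWeakSpace 𝕜 X '' closedBall c r) := by
  let e := LinearIsometryEquiv.ofSurjective (inclusionInDoubleDualLi 𝕜 (E := X)) hrefl
  have he : (fun x => inclusionInDoubleDualWeak 𝕜 X (toWeakSpace 𝕜 X x)) =
      StrongDual.toWeakDual ∘ e := rfl
  rw [(isEmbedding_inclusionInDoubleDualWeak 𝕜 X).isCompact_iff, image_image, he, image_comp,
    e.image_closedBall, StrongDual.toWeakDual.image_eq_preimage_symm]
  exact WeakDual.isCompact_closedBall (e c) r

theorem exists_mem_closedBall_mapClusterPt_toWeakSpace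
    (hrefl : Function.Surjective (inclusionInDoubleDual 𝕜 X)) {c : X} {r : ℝ} {x : ℕ → X}
    (hx : ∀ n, x n ∈ closedBall c r) :
    ∃ v ∈ closedBall c r, MapClusterPt (toWeakSpace 𝕜 X v) atTop (toWeakSpace 𝕜 X ∘ x) := by
  obtain ⟨_, ⟨v, hv, rfl⟩, hcl⟩ :=
    (isCompact_toWeakSpace_closedBall hrefl c r).exists_mapClusterPt_of_frequently
      (l := atTop) (f := toWeakSpace 𝕜 X ∘ x) (Frequently.of_forall fun n => ⟨x n, hx n, rfl⟩)
  exact ⟨v, hv, hcl⟩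

theorem ContinuousLinearMap.apply_mem_of_mapClusterPt_toWeakSpace {x : ℕ → X} {v : X}
    (hv : MapClusterPt (toWeakSpace 𝕜 X v) atTop (toWeakSpace 𝕜 X ∘ x))
    (S : X →L[𝕜] X) {M : Submodule 𝕜 X} (hM : IsClosed (M : Set X))
    (hSx : ∀ᶠ n in atTop, S (x n) ∈ M) : S v ∈ M := by
  have hSv := (M.isClosed_toWeakSpace_image hM).mem_of_mapClusterPt
    (hv.continuousAt_comp (WeakSpace.map S).continuous.continuousAt)
    (hSx.mono fun n h => ⟨_, h, rfl⟩)
  exact (toWeakSpace 𝕜 X).injective.mem_set_image.1 hSv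

theorem ContinuousLinearMap.mapsTo_topologicalClosure_span_orbit {R M : Type*} [Semiring R]
    [TopologicalSpace M] [AddCommMonoid M] [Module R M] [ContinuousAdd M] [ContinuousConstSMul R M]
    (T : M →L[R] M) (w : M) :
    MapsTo T (Submodule.span R (range fun n : ℕ => (T ^ n) w)).topologicalClosure
      (Submodule.span R (range fun n : ℕ => (T ^ n) w)).topologicalClosure :=
  fun _ hy => map_mem_closure T.continuous hy <| Submodule.mapsTo_span <| by
    rintro _ ⟨n, rfl⟩
    exact ⟨n + 1, by simp only [pow_succ']; rfl⟩

end

theorem statement10_general {𝕜 X : Type*} [RCLike 𝕜] [NormedAddCommGroup X] [NormedSpace 𝕜 X]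
    (hrefl : Function.Surjective ⇑(NormedSpace.inclusionInDoubleDual 𝕜 X))
    (T : X →L[𝕜] X) (c : X) (r : ℝ)
    (A : Set X) (hA : A = Metric.closedBall c r) :
    (∃ v ∈ A, T v = 0) ∨
    (∃ v ∈ A, ∃ Y : Submodule 𝕜 X,
        Y = (Submodule.span 𝕜 (Set.range fun n : ℕ => (T ^ n) (T v))).topologicalClosure ∧
        Y ≠ ⊥ ∧ Y ≠ ⊤ ∧ ∀ y ∈ Y, T y ∈ Y) ∨
    (∀ x : ℕ → X, (∀ n, x n ∈ A) →
        A ⊆ ((Submodule.span 𝕜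
          {y : X | ∃ k ℓ : ℕ, 1 ≤ k ∧ k ≤ ℓ ∧ y = (T ^ k) (x ℓ)}).topologicalClosure :
            Set X)) := by
  subst hA
  rw [← or_assoc, or_iff_not_imp_right]
  intro hiii
  push Not at hiii
  obtain ⟨x, hx, hsub⟩ := hiii
  obtain ⟨a, -, haM⟩ := not_subset.1 hsub
  set M := (Submodule.span 𝕜
    {y : X | ∃ k ℓ : ℕ, 1 ≤ k ∧ k ≤ ℓ ∧ y = (T ^ k) (x ℓ)}).topologicalClosure
  have hM : IsClosed (M : Set X) := Submodule.isClosed_topologicalClosure _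
  obtain ⟨v, hv, hcl⟩ := exists_mem_closedBall_mapClusterPt_toWeakSpace hrefl hx
  have horbit (n : ℕ) : (T ^ n) (T v) ∈ M := by
    rw [show (T ^ n) (T v) = (T ^ (n + 1)) v by rw [pow_succ]; rfl]
    refine (T ^ (n + 1)).apply_mem_of_mapClusterPt_toWeakSpace hcl hM
      (eventually_atTop.2 ⟨n + 1, fun ℓ hℓ => ?_⟩)
    exact Submodule.le_topologicalClosure _ (Submodule.subset_span ⟨n + 1, ℓ, by omega, hℓ, rfl⟩)
  by_cases hTv : T v = 0
  · exact .inl ⟨v, hv, hTv⟩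
  set Y := (Submodule.span 𝕜 (range fun n : ℕ => (T ^ n) (T v))).topologicalClosure
  refine .inr ⟨v, hv, Y, rfl, ?_, ?_, fun y hy => T.mapsTo_topologicalClosure_span_orbit _ hy⟩
  · have hTvY : T v ∈ Y := Submodule.le_topologicalClosure _ (Submodule.subset_span ⟨0, by simp⟩)
    exact (Submodule.ne_bot_iff Y).2 ⟨T v, hTvY, hTv⟩
  · have hYM : Y ≤ M := Submodule.topologicalClosure_minimal _
      (Submodule.span_le.2 (range_subset_iff.2 horbit)) hM
    exact fun hY => haM (hYM (hY ▸ Submodule.mem_top))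

/-- Let `X` be a reflexive Banach space of dimension greater than 1, `T` a bounded operator
on `X`, and `A` a closed ball of `X`.  Then either (i) there is `v ∈ A` with `Tv = 0`, or
(ii) there is `v ∈ A` such that the closed linear span of `Orb_T (Tv)` is a non-trivial
closed invariant subspace of `T`, or (iii) for every sequence `(x n) ∈ A^ℕ`, `A` is contained
in the closed linear span of `{T^k x_ℓ : ℓ ∈ ℕ, 1 ≤ k ≤ ℓ}`. -/
theorem statement10 {𝕜 X : Type*} [RCLike 𝕜] [NormedAddCommGroup X] [NormedSpace 𝕜 X]
    [CompleteSpace X]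
    (hrefl : Function.Surjective ⇑(NormedSpace.inclusionInDoubleDual 𝕜 X))
    (hdim : 1 < Module.rank 𝕜 X)
    (T : X →L[𝕜] X) (c : X) (r : ℝ) (hr : 0 < r)
    (A : Set X) (hA : A = Metric.closedBall c r) :
    (∃ v ∈ A, T v = 0) ∨
    (∃ v ∈ A, ∃ Y : Submodule 𝕜 X,
        Y = (Submodule.span 𝕜 (Set.range fun n : ℕ => (T ^ n) (T v))).topologicalClosure ∧
        Y ≠ ⊥ ∧ Y ≠ ⊤ ∧ ∀ y ∈ Y, T y ∈ Y) ∨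
    (∀ x : ℕ → X, (∀ n, x n ∈ A) →
        A ⊆ ((Submodule.span 𝕜
          {y : X | ∃ k ℓ : ℕ, 1 ≤ k ∧ k ≤ ℓ ∧ y = (T ^ k) (x ℓ)}).topologicalClosure :
            Set X)) :=
  statement10_general hrefl T c r A hA
end

section
/- Let X be a reflexive Banach space of dimension greater than 1, T a bounded linear operator on X, and A a weakly compact convex subset of X with nonempty norm interior. Then at least one of the following holds: (i) there exists v ∈ A such that Tv = 0; (ii) there exists v ∈ A such that the closed linear span of Orb_T(Tv) is a non-trivial closed invariant subspace of T; (iii) for every sequence (x_n)_{n∈ℕ} ∈ A^ℕ, A is contained in the closed linear span of {T^k x_ℓ : ℓ ∈ ℕ, 1 ≤ k ≤ ℓ}. -/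
open Filter Topology

/-!
Suppose (i) and (ii) fail. Then for every `v ∈ A` the closed span of the orbit of `T v` is
a closed invariant subspace containing `T v ≠ 0`, so it must be all of `X`. Given a sequence
`x` in `A`, let `M` be the closed span of the vectors `T^k x_ℓ` with `1 ≤ k ≤ ℓ`. If `M ≠ X`,
pick a functional `φ` vanishing on `M` but not identically. By weak compactness `x` has a weak
cluster point `w ∈ A`; for each `k ≥ 1` the sequence `φ (T^k x_ℓ)` is eventually zero, so
`φ (T^k w) = 0`. Hence `φ` vanishes on the orbit of `T w`, whose closed span is `X`, which is
absurd. So in fact `M = X`, which is (iii).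
-/

section OrbitSpan

variable {R E : Type*} [Semiring R] [AddCommMonoid E] [Module R E] [TopologicalSpace E]
  [ContinuousAdd E] [ContinuousConstSMul R E]

def closedOrbitSpan (T : E →L[R] E) (v : E) : Submodule R E :=
  (Submodule.span R (Set.range fun n : ℕ => (T ^ n) v)).topologicalClosure

variable (T : E →L[R] E) (v : E)

theorem isClosed_closedOrbitSpan : IsClosed (closedOrbitSpan T v : Set E) :=
  Submodule.isClosed_topologicalClosure _

theorem iterate_mem_closedOrbitSpan (n : ℕ) : (T ^ n) v ∈ closedOrbitSpan T v :=
  Submodule.le_topologicalClosure _ (Submodule.subset_span ⟨n, rfl⟩)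

theorem self_mem_closedOrbitSpan : v ∈ closedOrbitSpan T v := by
  simpa using iterate_mem_closedOrbitSpan T v 0

theorem closedOrbitSpan_le {M : Submodule R E} (hM : IsClosed (M : Set E))
    (h : ∀ n : ℕ, (T ^ n) v ∈ M) : closedOrbitSpan T v ≤ M :=
  Submodule.topologicalClosure_minimal _ (Submodule.span_le.2 (Set.range_subset_iff.2 h)) hM

theorem closedOrbitSpan_ne_bot {v : E} (hv : v ≠ 0) : closedOrbitSpan T v ≠ ⊥ := fun h =>
  hv ((Submodule.mem_bot R).1 (h ▸ self_mem_closedOrbitSpan T v))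

theorem map_mem_closedOrbitSpan {y : E} (hy : y ∈ closedOrbitSpan T v) :
    T y ∈ closedOrbitSpan T v := by
  have hle : closedOrbitSpan T v ≤ (closedOrbitSpan T v).comap T.toLinearMap :=
    closedOrbitSpan_le T v ((isClosed_closedOrbitSpan T v).preimage T.continuous) fun n => by
      simpa only [Submodule.mem_comap, ContinuousLinearMap.coe_coe, pow_succ',
        mul_apply_eq_comp] using iterate_mem_closedOrbitSpan T v (n + 1)
  exact hle hy

end OrbitSpan

section Normed

variable {𝕜 E : Type*} [RCLike 𝕜] [NormedAddCommGroup E] [NormedSpace 𝕜 E]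

theorem Submodule.exists_strongDual_separating_of_notMem {M : Submodule 𝕜 E}
    (hM : IsClosed (M : Set E)) {a : E} (ha : a ∉ M) :
    ∃ φ : StrongDual 𝕜 E, (∀ y ∈ M, φ y = 0) ∧ φ a ≠ 0 := by
  -- the norm on `E ⧸ M` takes closedness of `M` as an instance
  have : IsClosed (M : Set E) := hM
  obtain ⟨g, hg⟩ := SeparatingDual.exists_ne_zero (R := 𝕜) (x := M.mkQ a)
    (by rwa [Ne, Submodule.mkQ_apply, Submodule.Quotient.mk_eq_zero])
  refine ⟨g.comp M.mkQL, fun y hy => ?_, hg⟩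
  simp [(Submodule.Quotient.mk_eq_zero M).2 hy]

theorem exists_mem_forall_mapClusterPt_strongDual {A : Set E}
    (hA : IsCompact (toWeakSpace 𝕜 E '' A)) {ι : Type*} {l : Filter ι} [l.NeBot] {x : ι → E}
    (hx : ∀ i, x i ∈ A) :
    ∃ w ∈ A, ∀ φ : StrongDual 𝕜 E, MapClusterPt (φ w) l fun i => φ (x i) := by
  obtain ⟨_, ⟨w, hwA, rfl⟩, hw⟩ := hA.exists_clusterPt (f := map (toWeakSpace 𝕜 E ∘ x) l)
    (le_principal_iff.2 (mem_map.2 (Eventually.of_forall fun i => ⟨x i, hx i, rfl⟩)))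
  exact ⟨w, hwA, fun φ =>
    hw.map (WeakBilin.eval_continuous (topDualPairing 𝕜 E).flip φ).continuousAt tendsto_map⟩

theorem topologicalClosure_span_iterates_eq_top {A : Set E}
    (hA : IsCompact (toWeakSpace 𝕜 E '' A)) (T : E →L[𝕜] E)
    (horb : ∀ v ∈ A, closedOrbitSpan T (T v) = ⊤) (x : ℕ → E) (hx : ∀ n, x n ∈ A) :
    (Submodule.span 𝕜 {y : E | ∃ k ℓ : ℕ, 1 ≤ k ∧ k ≤ ℓ ∧ y = (T ^ k) (x ℓ)}).topologicalClosure
      = ⊤ := by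
  set S := Submodule.span 𝕜 {y : E | ∃ k ℓ : ℕ, 1 ≤ k ∧ k ≤ ℓ ∧ y = (T ^ k) (x ℓ)}
  refine Submodule.eq_top_iff'.2 fun a => by_contra fun ha => ?_
  obtain ⟨φ, hφS, hφa⟩ :=
    Submodule.exists_strongDual_separating_of_notMem S.isClosed_topologicalClosure ha
  obtain ⟨w, hwA, hw⟩ := exists_mem_forall_mapClusterPt_strongDual hA (l := atTop) hx
  have hφw : ∀ k, φ ((T ^ (k + 1)) w) = 0 := fun k => by
    have hev : ∀ᶠ n in atTop, (φ ∘L T ^ (k + 1)) (x n) = 0 :=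
      (eventually_ge_atTop (k + 1)).mono fun n hn =>
        hφS _ (S.le_topologicalClosure (Submodule.subset_span ⟨k + 1, n, by omega, hn, rfl⟩))
    exact eq_of_nhds_neBot <| ClusterPt.mono (hw (φ ∘L T ^ (k + 1)))
      (tendsto_const_nhds.congr' (hev.mono fun _ h => h.symm))
  have hker : closedOrbitSpan T (T w) ≤ LinearMap.ker (φ : E →ₗ[𝕜] 𝕜) :=
    closedOrbitSpan_le T (T w) φ.isClosed_ker fun k => by
      simpa only [LinearMap.mem_ker, ContinuousLinearMap.coe_coe, pow_succ,
        mul_apply_eq_comp] using hφw k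
  exact hφa (hker (horb w hwA ▸ Submodule.mem_top))

end Normed

theorem statement12_general {𝕜 X : Type*} [RCLike 𝕜] [NormedAddCommGroup X] [NormedSpace 𝕜 X]
    (T : X →L[𝕜] X) (A : Set X)
    (hAcpt : IsCompact (toWeakSpace 𝕜 X '' A)) :
    (∃ v ∈ A, T v = 0) ∨
    (∃ v ∈ A, ∃ Y : Submodule 𝕜 X,
        Y = (Submodule.span 𝕜 (Set.range fun n : ℕ => (T ^ n) (T v))).topologicalClosure ∧
        Y ≠ ⊥ ∧ Y ≠ ⊤ ∧ ∀ y ∈ Y, T y ∈ Y) ∨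
    (∀ x : ℕ → X, (∀ n, x n ∈ A) →
        A ⊆ ((Submodule.span 𝕜
          {y : X | ∃ k ℓ : ℕ, 1 ≤ k ∧ k ≤ ℓ ∧ y = (T ^ k) (x ℓ)}).topologicalClosure :
            Set X)) := by
  by_cases hker : ∃ v ∈ A, T v = 0
  · exact Or.inl hker
  by_cases hinv : ∃ v ∈ A, ∃ Y : Submodule 𝕜 X,
      Y = (Submodule.span 𝕜 (Set.range fun n : ℕ => (T ^ n) (T v))).topologicalClosure ∧
      Y ≠ ⊥ ∧ Y ≠ ⊤ ∧ ∀ y ∈ Y, T y ∈ Y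
  · exact Or.inr (Or.inl hinv)
  have horb : ∀ v ∈ A, closedOrbitSpan T (T v) = ⊤ := fun v hv => by_contra fun hne =>
    hinv ⟨v, hv, _, rfl, closedOrbitSpan_ne_bot T fun hTv => hker ⟨v, hv, hTv⟩, hne,
      fun _ => map_mem_closedOrbitSpan T (T v)⟩
  refine Or.inr (Or.inr fun x hx => ?_)
  rw [topologicalClosure_span_iterates_eq_top hAcpt T horb x hx]
  exact Set.subset_univ A

/-- Let `X` be a reflexive Banach space of dimension greater than 1, `T` a bounded operator
on `X`, and `A` a weakly compact convex subset of `X` with nonempty norm interior.  Then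
either (i) there is `v ∈ A` with `Tv = 0`, or (ii) there is `v ∈ A` such that the closed
linear span of `Orb_T (Tv)` is a non-trivial closed invariant subspace of `T`, or (iii) for
every sequence `(x n) ∈ A^ℕ`, `A` is contained in the closed linear span of
`{T^k x_ℓ : ℓ ∈ ℕ, 1 ≤ k ≤ ℓ}`. -/
theorem statement12 {𝕜 X : Type*} [RCLike 𝕜] [NormedAddCommGroup X] [NormedSpace 𝕜 X]
    [NormedSpace ℝ X] [IsScalarTower ℝ 𝕜 X] [CompleteSpace X]
    (hrefl : Function.Surjective ⇑(NormedSpace.inclusionInDoubleDual 𝕜 X))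
    (hdim : 1 < Module.rank 𝕜 X)
    (T : X →L[𝕜] X) (A : Set X)
    (hAcpt : IsCompact (toWeakSpace 𝕜 X '' A)) (hconv : Convex ℝ A)
    (hint : (interior A).Nonempty) :
    (∃ v ∈ A, T v = 0) ∨
    (∃ v ∈ A, ∃ Y : Submodule 𝕜 X,
        Y = (Submodule.span 𝕜 (Set.range fun n : ℕ => (T ^ n) (T v))).topologicalClosure ∧
        Y ≠ ⊥ ∧ Y ≠ ⊤ ∧ ∀ y ∈ Y, T y ∈ Y) ∨
    (∀ x : ℕ → X, (∀ n, x n ∈ A) →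
        A ⊆ ((Submodule.span 𝕜
          {y : X | ∃ k ℓ : ℕ, 1 ≤ k ∧ k ≤ ℓ ∧ y = (T ^ k) (x ℓ)}).topologicalClosure :
            Set X)) :=
  statement12_general T A hAcpt
end

section
/- Let X be a reflexive Banach space, T a bounded linear operator on X, and A a closed ball of X (A = {x ∈ X : ‖x − c‖ ≤ r}, r > 0) with 0 ∉ A; let A° denote the norm interior of A. Suppose that for every symmetric convex weakly open neighborhood V of the origin of X there exist finitely many points a_1, …, a_n ∈ A° with A ⊆ ⋃_{i=1}^n (a_i + V) such that, setting B(V) = {x^* ∈ X^* : there exists 1 ≤ i ≤ n with Re x^*(x) ≥ 0 for all x ∈ A ∩ (a_i + V) and Re x^*(a_i) = 1}, for every sequence (x_n)_{n∈ℕ} ∈ A^ℕ there exists m ∈ ℕ with B(V) ⊆ ⋃_{ℓ=1}^m ⋃_{k=1}^ℓ {x^* ∈ X^* : |x^*(T^k x_ℓ)| ≥ 1/m}. Then for every sequence (x_n)_{n∈ℕ} ∈ A^ℕ, A is contained in the closed linear span of {T^k x_ℓ : ℓ ∈ ℕ, 1 ≤ k ≤ ℓ}. -/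
/-!
If some `a₀ ∈ A` lies outside the closed span `M` of the `T^k x_ℓ`, Hahn–Banach (in `X ⧸ M`)
gives `f ∈ X*` vanishing on `M` with `f a₀ = 1`. Apply the hypothesis to the weak neighbourhood
`V = {v | |Re f v| < 1/2}`: from `a₀ ∈ aᵢ + V` we get `Re f aᵢ > 1/2`, so `f / Re f aᵢ` is
nonnegative on `aᵢ + V` and lies in `B(V)`. But it vanishes at every `T^k x_ℓ`, so it lies in
none of the sets covering `B(V)`.
-/

section

open RCLike

variable {𝕜 X : Type*} [RCLike 𝕜] [NormedAddCommGroup X] [NormedSpace 𝕜 X]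

theorem Submodule.exists_dual_eq_zero_eq_one_of_notMem (M : Submodule 𝕜 X)
    (hM : IsClosed (M : Set X)) {a : X} (ha : a ∉ M) :
    ∃ f : X →L[𝕜] 𝕜, (∀ z ∈ M, f z = 0) ∧ f a = 1 := by
  have := hM
  have hq : M.mkQ a ≠ 0 := by rwa [ne_eq, mkQ_apply, Quotient.mk_eq_zero]
  obtain ⟨g, hg⟩ := SeparatingDual.exists_eq_one (R := 𝕜) hq
  exact ⟨g.comp M.mkQL, fun z hz => by simp [(Quotient.mk_eq_zero M).2 hz], hg⟩

def reSlab (f : X →L[𝕜] 𝕜) : Set X := {v | |re (f v)| < 1 / 2}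

theorem isOpen_toWeakSpace_image_reSlab (f : X →L[𝕜] 𝕜) :
    IsOpen (toWeakSpace 𝕜 X '' reSlab f) := by
  rw [LinearEquiv.image_eq_preimage_symm]
  exact isOpen_Iio.preimage <| continuous_abs.comp <| continuous_re.comp <|
    WeakBilin.eval_continuous _ f

theorem zero_mem_reSlab (f : X →L[𝕜] 𝕜) : (0 : X) ∈ reSlab f := by
  simp [reSlab]

theorem neg_reSlab (f : X →L[𝕜] 𝕜) : -reSlab f = reSlab f := by
  ext v
  simp [reSlab]

theorem convex_reSlab [NormedSpace ℝ X] [IsScalarTower ℝ 𝕜 X] (f : X →L[𝕜] 𝕜) :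
    Convex ℝ (reSlab f) := by
  have : reSlab f =
      (reCLM.comp (f.restrictScalars ℝ)).toLinearMap ⁻¹' Set.Ioo (-(1 / 2)) (1 / 2) := by
    ext v
    simp [reSlab, abs_lt]
  rw [this]
  exact (convex_Ioo _ _).linear_preimage _

theorem exists_smul_re_nonneg_on_add_reSlab {f : X →L[𝕜] 𝕜} {a a₀ : X}
    (ha₀ : a₀ ∈ (a + ·) '' reSlab f) (hfa₀ : re (f a₀) = 1) :
    ∃ t : ℝ, (∀ y ∈ (a + ·) '' reSlab f, 0 ≤ re ((t • f) y)) ∧ re ((t • f) a) = 1 := by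
  obtain ⟨v, hv, rfl⟩ := ha₀
  have hv := abs_lt.1 (show |re (f v)| < 1 / 2 from hv)
  rw [map_add, map_add] at hfa₀
  have ha : 0 < re (f a) := by linarith
  refine ⟨(re (f a))⁻¹, ?_, ?_⟩
  · rintro _ ⟨w, hw, rfl⟩
    have hw := abs_lt.1 (show |re (f w)| < 1 / 2 from hw)
    rw [smul_apply, smul_re, map_add, map_add]
    exact mul_nonneg (inv_nonneg.2 ha.le) (by linarith)
  · rw [smul_apply, smul_re]
    exact inv_mul_cancel₀ ha.ne'

end

theorem statement14_general {𝕜 X : Type*} [RCLike 𝕜] [NormedAddCommGroup X] [NormedSpace 𝕜 X]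
    [NormedSpace ℝ X] [IsScalarTower ℝ 𝕜 X]
    (T : X →L[𝕜] X)
    (A : Set X)
    (hmain : ∀ V : Set X,
      IsOpen (toWeakSpace 𝕜 X '' V) → (0 : X) ∈ V → V = -V → Convex ℝ V →
      ∃ (n : ℕ) (a : Fin n → X), (∀ i, a i ∈ interior A) ∧ (A ⊆ ⋃ i, (a i + ·) '' V) ∧
        ∀ x : ℕ → X, (∀ j, x j ∈ A) →
          ∃ m : ℕ, 1 ≤ m ∧
            {f : X →L[𝕜] 𝕜 | ∃ i,
                (∀ y ∈ A ∩ ((a i + ·) '' V), 0 ≤ RCLike.re (f y)) ∧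
                RCLike.re (f (a i)) = 1} ⊆
              ⋃ ℓ ∈ Finset.Icc 1 m, ⋃ k ∈ Finset.Icc 1 ℓ,
                {f : X →L[𝕜] 𝕜 | (m : ℝ)⁻¹ ≤ ‖f ((T ^ k) (x ℓ))‖}) :
    ∀ x : ℕ → X, (∀ j, x j ∈ A) →
      A ⊆ ((Submodule.span 𝕜
        {y : X | ∃ k ℓ : ℕ, 1 ≤ k ∧ k ≤ ℓ ∧ y = (T ^ k) (x ℓ)}).topologicalClosure :
          Set X) := by
  intro x hx
  set S := Submodule.span 𝕜 {y : X | ∃ k ℓ : ℕ, 1 ≤ k ∧ k ≤ ℓ ∧ y = (T ^ k) (x ℓ)}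
  by_contra hAM
  obtain ⟨a₀, ha₀A, ha₀S⟩ := Set.not_subset.1 hAM
  obtain ⟨f, hfS, hfa₀⟩ := S.topologicalClosure.exists_dual_eq_zero_eq_one_of_notMem
    S.isClosed_topologicalClosure ha₀S
  obtain ⟨n, a, -, hcover, hB⟩ := hmain (reSlab f) (isOpen_toWeakSpace_image_reSlab f)
    (zero_mem_reSlab f) (neg_reSlab f).symm (convex_reSlab f)
  obtain ⟨m, hm, hBsub⟩ := hB x hx
  obtain ⟨i, ha₀i⟩ := Set.mem_iUnion.1 (hcover ha₀A)
  obtain ⟨t, ht_nonneg, ht_one⟩ := exists_smul_re_nonneg_on_add_reSlab ha₀i (by simp [hfa₀])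
  obtain ⟨ℓ, -, k, ⟨hk, hkℓ⟩, hbound⟩ : ∃ ℓ, (1 ≤ ℓ ∧ ℓ ≤ m) ∧ ∃ k, (1 ≤ k ∧ k ≤ ℓ) ∧
      (m : ℝ)⁻¹ ≤ ‖(t • f) ((T ^ k) (x ℓ))‖ := by
    simpa only [Set.mem_iUnion, Finset.mem_Icc, Set.mem_ofPred_eq, exists_prop] using
      hBsub ⟨i, fun y hy => ht_nonneg y hy.2, ht_one⟩
  have hTkx : (T ^ k) (x ℓ) ∈ S.topologicalClosure :=
    S.le_topologicalClosure (Submodule.subset_span ⟨k, ℓ, hk, hkℓ, rfl⟩)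
  rw [smul_apply, hfS _ hTkx, smul_zero, norm_zero] at hbound
  exact (inv_pos.2 (Nat.cast_pos.2 hm)).not_ge hbound

/-- Let `X` be a reflexive Banach space, `T` a bounded operator on `X`, and `A` a closed
ball of `X` with `0 ∉ A`.  Suppose that for every symmetric convex weakly open neighborhood
`V` of the origin there exist finitely many points `a₁, …, aₙ` of the norm interior of `A`
with `A ⊆ ⋃ᵢ (aᵢ + V)` such that, setting
`B(V) = {x* : ∃ i, Re x*(x) ≥ 0 for all x ∈ A ∩ (aᵢ + V) and Re x*(aᵢ) = 1}`, for every
sequence `(x n) ∈ A^ℕ` there exists `m ∈ ℕ` with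
`B(V) ⊆ ⋃_{ℓ=1}^m ⋃_{k=1}^ℓ {x* : |x*(T^k x_ℓ)| ≥ 1/m}`.  Then for every sequence
`(x n) ∈ A^ℕ`, `A` is contained in the closed linear span of `{T^k x_ℓ : ℓ ∈ ℕ, 1 ≤ k ≤ ℓ}`. -/
theorem statement14 {𝕜 X : Type*} [RCLike 𝕜] [NormedAddCommGroup X] [NormedSpace 𝕜 X]
    [NormedSpace ℝ X] [IsScalarTower ℝ 𝕜 X] [CompleteSpace X]
    (hrefl : Function.Surjective ⇑(NormedSpace.inclusionInDoubleDual 𝕜 X))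
    (T : X →L[𝕜] X) (c : X) (r : ℝ) (hr : 0 < r)
    (A : Set X) (hA : A = Metric.closedBall c r) (h0A : (0 : X) ∉ A)
    (hmain : ∀ V : Set X,
      IsOpen (toWeakSpace 𝕜 X '' V) → (0 : X) ∈ V → V = -V → Convex ℝ V →
      ∃ (n : ℕ) (a : Fin n → X), (∀ i, a i ∈ interior A) ∧ (A ⊆ ⋃ i, (a i + ·) '' V) ∧
        ∀ x : ℕ → X, (∀ j, x j ∈ A) →
          ∃ m : ℕ, 1 ≤ m ∧
            {f : X →L[𝕜] 𝕜 | ∃ i,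
                (∀ y ∈ A ∩ ((a i + ·) '' V), 0 ≤ RCLike.re (f y)) ∧
                RCLike.re (f (a i)) = 1} ⊆
              ⋃ ℓ ∈ Finset.Icc 1 m, ⋃ k ∈ Finset.Icc 1 ℓ,
                {f : X →L[𝕜] 𝕜 | (m : ℝ)⁻¹ ≤ ‖f ((T ^ k) (x ℓ))‖}) :
    ∀ x : ℕ → X, (∀ j, x j ∈ A) →
      A ⊆ ((Submodule.span 𝕜
        {y : X | ∃ k ℓ : ℕ, 1 ≤ k ∧ k ≤ ℓ ∧ y = (T ^ k) (x ℓ)}).topologicalClosure :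
          Set X) :=
  statement14_general T A hmain
end

section
/- Let X be a Banach space, T a bounded linear operator on X, A a bounded subset of X, and B a subset of X^*. Suppose that for every sequence (x_n)_{n∈ℕ} ∈ A^ℕ there exists m ∈ ℕ such that B ⊆ ⋃_{ℓ=1}^m ⋃_{k=1}^ℓ {x^* ∈ X^* : |x^*(T^k x_ℓ)| ≥ 1/m}, and define m((x_n)_{n∈ℕ}) to be the minimal such m. Then the function m : A^ℕ → ℕ is sequentially lower semicontinuous with respect to coordinatewise weak convergence: if (x_{j,n})_{n∈ℕ} ∈ A^ℕ for each j ∈ ℕ, (x_n)_{n∈ℕ} ∈ A^ℕ, and x_{j,ℓ} → x_ℓ weakly as j → ∞ for every ℓ ∈ ℕ, then m((x_{j,n})_{n∈ℕ}) ≥ m((x_n)_{n∈ℕ}) for all sufficiently large j. -/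
open Filter Topology

/-!
For a fixed level `m` and a fixed functional `f`, "`f` lies in the `m`-th covering set of
`x`" only involves the finitely many numbers `‖f (T^k x_ℓ)‖`, `1 ≤ k ≤ ℓ ≤ m`, and is a closed
condition on them. Since `f ∘ T^k` is again a functional, these numbers converge under
coordinatewise weak convergence, so covering at level `m` passes to weak limits. Hence every
level `m < μ x` at which `x` fails to cover also fails for `x_j` when `j` is large, which
forces `μ (x_j) ≥ μ x`.
-/

section Covering

variable {𝕜 X : Type*} [NormedField 𝕜] [NormedAddCommGroup X] [NormedSpace 𝕜 X]

def CoversAtLevel (T : X →L[𝕜] X) (B : Set (X →L[𝕜] 𝕜)) (x : ℕ → X) (m : ℕ) : Prop :=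
  B ⊆ ⋃ ℓ ∈ Finset.Icc 1 m, ⋃ k ∈ Finset.Icc 1 ℓ,
    {f : X →L[𝕜] 𝕜 | (m : ℝ)⁻¹ ≤ ‖f ((T ^ k) (x ℓ))‖}

lemma isClosed_biUnion_Icc_le_apply (m : ℕ) (c : ℝ) :
    IsClosed (⋃ ℓ ∈ Finset.Icc 1 m, ⋃ k ∈ Finset.Icc 1 ℓ, {g : ℕ × ℕ → ℝ | c ≤ g (ℓ, k)}) :=
  isClosed_biUnion_finset fun _ _ ↦ isClosed_biUnion_finset fun _ _ ↦
    isClosed_le continuous_const (continuous_apply _)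

lemma CoversAtLevel.of_frequently_of_weak_tendsto {ι : Type*} {l : Filter ι}
    {T : X →L[𝕜] X} {B : Set (X →L[𝕜] 𝕜)} {xj : ι → ℕ → X} {x : ℕ → X} {m : ℕ}
    (hconv : ∀ ℓ, ∀ f : X →L[𝕜] 𝕜, Tendsto (fun j ↦ f (xj j ℓ)) l (𝓝 (f (x ℓ))))
    (hcov : ∃ᶠ j in l, CoversAtLevel T B (xj j) m) :
    CoversAtLevel T B x m := by
  intro f hf
  let values : (ℕ → X) → ℕ × ℕ → ℝ := fun y p ↦ ‖f ((T ^ p.2) (y p.1))‖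
  have hvalues : Tendsto (fun j ↦ values (xj j)) l (𝓝 (values x)) :=
    tendsto_pi_nhds.2 fun p ↦ (hconv p.1 (f.comp (T ^ p.2))).norm
  have hmem := (isClosed_biUnion_Icc_le_apply m (m : ℝ)⁻¹).mem_of_frequently_of_tendsto
    (hcov.mono fun j hj ↦ by simpa [values] using hj hf) hvalues
  simpa [values] using hmem

end Covering

theorem statement15_general {𝕜 X : Type*} [RCLike 𝕜] [NormedAddCommGroup X] [NormedSpace 𝕜 X]
    (T : X →L[𝕜] X) (A : Set X)
    (B : Set (X →L[𝕜] 𝕜))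
    (μ : (ℕ → X) → ℕ)
    (hμ : ∀ x : ℕ → X, (∀ n, x n ∈ A) →
        (1 ≤ μ x ∧
          B ⊆ ⋃ ℓ ∈ Finset.Icc 1 (μ x), ⋃ k ∈ Finset.Icc 1 ℓ,
            {f : X →L[𝕜] 𝕜 | ((μ x : ℝ))⁻¹ ≤ ‖f ((T ^ k) (x ℓ))‖}) ∧
        ∀ m : ℕ, 1 ≤ m →
          (B ⊆ ⋃ ℓ ∈ Finset.Icc 1 m, ⋃ k ∈ Finset.Icc 1 ℓ,
            {f : X →L[𝕜] 𝕜 | (m : ℝ)⁻¹ ≤ ‖f ((T ^ k) (x ℓ))‖}) → μ x ≤ m)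
    (xj : ℕ → ℕ → X) (hxj : ∀ j n, xj j n ∈ A)
    (x : ℕ → X) (hx : ∀ n, x n ∈ A)
    (hconv : ∀ ℓ : ℕ, ∀ f : X →L[𝕜] 𝕜,
        Tendsto (fun j => f (xj j ℓ)) atTop (𝓝 (f (x ℓ)))) :
    ∀ᶠ j in atTop, μ x ≤ μ (xj j) := by
  have hlow : ∀ m ∈ Finset.Ico 1 (μ x), ∀ᶠ j in atTop, μ (xj j) ≠ m := by
    intro m hm
    obtain ⟨hm_pos, hm_lt⟩ := Finset.mem_Ico.1 hm
    have hfails : ¬CoversAtLevel T B x m := fun h ↦ hm_lt.not_ge ((hμ x hx).2 m hm_pos h)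
    have hfails_eventually : ∀ᶠ j in atTop, ¬CoversAtLevel T B (xj j) m :=
      not_frequently.1 fun h ↦ hfails (CoversAtLevel.of_frequently_of_weak_tendsto hconv h)
    filter_upwards [hfails_eventually] with j hj hjm
    exact hj (hjm ▸ (hμ (xj j) (hxj j)).1.2)
  filter_upwards [(eventually_all_finset _).2 hlow] with j hj
  by_contra! hlt
  exact hj (μ (xj j)) (Finset.mem_Ico.2 ⟨(hμ (xj j) (hxj j)).1.1, hlt⟩) rfl

/-- Let `X` be a Banach space, `T` a bounded operator on `X`, `A` a bounded subset of `X`,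
and `B ⊆ X*`.  Suppose that for every sequence `(x n) ∈ A^ℕ` there is `m ∈ ℕ` with
`B ⊆ ⋃_{ℓ=1}^m ⋃_{k=1}^ℓ {x* : |x*(T^k x_ℓ)| ≥ 1/m}`, and let `μ (x) ` denote the minimal
such `m`.  Then `μ` is sequentially lower semicontinuous with respect to coordinatewise weak
convergence: if `x_{j,ℓ} → x_ℓ` weakly as `j → ∞` for every `ℓ`, then
`μ (x_j) ≥ μ (x)` for all sufficiently large `j`. -/
theorem statement15 {𝕜 X : Type*} [RCLike 𝕜] [NormedAddCommGroup X] [NormedSpace 𝕜 X]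
    [CompleteSpace X]
    (T : X →L[𝕜] X) (A : Set X) (hA : Bornology.IsBounded A)
    (B : Set (X →L[𝕜] 𝕜))
    (hex : ∀ x : ℕ → X, (∀ n, x n ∈ A) → ∃ m : ℕ, 1 ≤ m ∧
        B ⊆ ⋃ ℓ ∈ Finset.Icc 1 m, ⋃ k ∈ Finset.Icc 1 ℓ,
          {f : X →L[𝕜] 𝕜 | (m : ℝ)⁻¹ ≤ ‖f ((T ^ k) (x ℓ))‖})
    (μ : (ℕ → X) → ℕ)
    (hμ : ∀ x : ℕ → X, (∀ n, x n ∈ A) →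
        (1 ≤ μ x ∧
          B ⊆ ⋃ ℓ ∈ Finset.Icc 1 (μ x), ⋃ k ∈ Finset.Icc 1 ℓ,
            {f : X →L[𝕜] 𝕜 | ((μ x : ℝ))⁻¹ ≤ ‖f ((T ^ k) (x ℓ))‖}) ∧
        ∀ m : ℕ, 1 ≤ m →
          (B ⊆ ⋃ ℓ ∈ Finset.Icc 1 m, ⋃ k ∈ Finset.Icc 1 ℓ,
            {f : X →L[𝕜] 𝕜 | (m : ℝ)⁻¹ ≤ ‖f ((T ^ k) (x ℓ))‖}) → μ x ≤ m)
    (xj : ℕ → ℕ → X) (hxj : ∀ j n, xj j n ∈ A)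
    (x : ℕ → X) (hx : ∀ n, x n ∈ A)
    (hconv : ∀ ℓ : ℕ, ∀ f : X →L[𝕜] 𝕜,
        Tendsto (fun j => f (xj j ℓ)) atTop (𝓝 (f (x ℓ)))) :
    ∀ᶠ j in atTop, μ x ≤ μ (xj j) :=
  statement15_general T A B μ hμ xj hxj x hx hconv
end
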